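/- arXiv:0902.1357 — 11 statements merged into one kernel-verified Lean document; each statement's English description precedes it below -/
import Mathlib

section
/- Let V be a vector space over a field K (K = ℚ or ℝ) and let C be a cone in V (closed under addition and under multiplication by positive scalars of K). Then C is open in the strong topology (i.e., C ∩ W is open for every finite-dimensional subspace W) if and only if for every a ∈ C and every x ∈ V there exists δ₀ ∈ K with δ₀ > 0 such that a + δ₀·x ∈ C. -/
/-!
A cone is convex, and both directions are statements about convex sets. If `C` is strongly
open, its trace on the plane spanned by `a` and `x` is open, so it contains `a + t • x` for all
small `t`. Conversely, let `s ⊆ K^ι` be convex and radially open. Around `c ∈ s` each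
coordinate line `t ↦ c + t • eᵢ` stays in `s` for `t` near `0`, and every `y` near `c` is the
average of the `n = card ι` points `c + n (yᵢ - cᵢ) • eᵢ`, which lie on these lines close to `c`.
-/

/-- `U` is open in the strong topology on `V`: its preimage under every linear map
from a finite-dimensional coordinate space `K^n` is open. -/
def StrongOpen (K : Type*) [Field K] [LinearOrder K] [IsStrictOrderedRing K] [TopologicalSpace K]
    {V : Type*} [AddCommGroup V] [Module K V] (U : Set V) : Prop :=
  ∀ (n : ℕ) (φ : (Fin n → K) →ₗ[K] V), IsOpen (φ ⁻¹' U)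

/-- `C` is a cone: closed under addition and multiplication by positive scalars. -/
def IsCone (K : Type*) [Field K] [LinearOrder K] [IsStrictOrderedRing K] {V : Type*} [AddCommGroup V]
    [Module K V] (C : Set V) : Prop :=
  (∀ x ∈ C, ∀ y ∈ C, x + y ∈ C) ∧ ∀ x ∈ C, ∀ l : K, 0 < l → l • x ∈ C

open Filter Topology Set

section Convex

variable {K : Type*} [Field K] [LinearOrder K] [IsStrictOrderedRing K]
  {V : Type*} [AddCommGroup V] [Module K V] {s : Set V}

theorem IsCone.convex (hs : IsCone K s) : Convex K s := by
  intro x hx y hy a b ha hb hab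
  rcases ha.eq_or_lt with rfl | ha
  · simpa [show b = 1 by simpa using hab] using hy
  rcases hb.eq_or_lt with rfl | hb
  · simpa [show a = 1 by simpa using hab] using hx
  exact hs.1 _ (hs.2 x hx a ha) _ (hs.2 y hy b hb)

theorem Convex.add_smul_mem_of_mem_Icc (hs : Convex K s) {a x : V} (ha : a ∈ s) {δ : K}
    (hδ : 0 < δ) (hx : a + δ • x ∈ s) {t : K} (ht : t ∈ Icc 0 δ) : a + t • x ∈ s := by
  have h := hs.add_smul_mem ha hx (t := t / δ)
    ⟨div_nonneg ht.1 hδ.le, (div_le_one hδ).2 ht.2⟩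
  rwa [smul_smul, div_mul_cancel₀ t hδ.ne'] at h

variable [TopologicalSpace K] [OrderTopology K]

theorem Convex.eventually_nhds_zero_add_smul_mem (hs : Convex K s) {a : V} (ha : a ∈ s)
    (hs' : ∀ a ∈ s, ∀ x : V, ∃ δ : K, 0 < δ ∧ a + δ • x ∈ s) (x : V) :
    ∀ᶠ t in 𝓝 (0 : K), a + t • x ∈ s := by
  obtain ⟨δ₁, hδ₁, hx⟩ := hs' a ha x
  obtain ⟨δ₂, hδ₂, hx'⟩ := hs' a ha (-x)
  filter_upwards [Ioo_mem_nhds (neg_lt_zero.2 hδ₂) hδ₁] with t ht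
  rcases le_total 0 t with h | h
  · exact hs.add_smul_mem_of_mem_Icc ha hδ₁ hx ⟨h, ht.2.le⟩
  · simpa using
      hs.add_smul_mem_of_mem_Icc ha hδ₂ hx' (t := -t) ⟨neg_nonneg.2 h, by linarith [ht.1]⟩

theorem Convex.isOpen_of_forall_exists_add_smul_mem {ι : Type*} [Fintype ι]
    {s : Set (ι → K)} (hs : Convex K s)
    (hs' : ∀ a ∈ s, ∀ x : ι → K, ∃ δ : K, 0 < δ ∧ a + δ • x ∈ s) : IsOpen s := by
  classical
  refine isOpen_iff_mem_nhds.2 fun c hc => ?_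
  rcases isEmpty_or_nonempty ι with hι | hι
  · exact mem_of_superset univ_mem fun y _ => Subsingleton.elim c y ▸ hc
  set n : K := (Fintype.card ι : K)
  have hn : 0 < n := by simp [n, Fintype.card_pos]
  have hline : ∀ i, ∀ᶠ y in 𝓝 c, c + (n * (y i - c i)) • Pi.single i 1 ∈ s := fun i => by
    have : Tendsto (fun y : ι → K => n * (y i - c i)) (𝓝 c) (𝓝 0) :=
      (((continuous_apply i).sub (continuous_const (y := c i))).const_mul n).tendsto' c 0
        (by simp)
    exact this.eventually (hs.eventually_nhds_zero_add_smul_mem hc hs' _)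
  filter_upwards [eventually_all.2 hline] with y hy
  have hy_eq : y = ∑ i, n⁻¹ • (c + (n * (y i - c i)) • Pi.single i 1) := by
    ext j
    simp [Finset.sum_add_distrib, Pi.single_apply, n, hn.ne']
  rw [hy_eq]
  exact hs.sum_mem (fun i _ => inv_nonneg.2 hn.le) (by simp [n, hn.ne']) fun i _ => hy i

end Convex

section StrongTopology

variable {K : Type*} [Field K] [LinearOrder K] [IsStrictOrderedRing K] [TopologicalSpace K]
  [OrderTopology K] {V : Type*} [AddCommGroup V] [Module K V]

theorem StrongOpen.exists_pos_add_smul_mem {U : Set V} (hU : StrongOpen K U) {a : V} (ha : a ∈ U)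
    (x : V) : ∃ δ : K, 0 < δ ∧ a + δ • x ∈ U := by
  have hline : Continuous fun t : K => ![1, t] :=
    continuous_const.matrixVecCons (continuous_id.matrixVecCons continuous_const)
  have hnhds : ∀ᶠ t in 𝓝 (0 : K), a + t • x ∈ U := by
    have := ((hU 2 (Fintype.linearCombination K ![a, x])).preimage hline).mem_nhds
      (x := 0) (by simpa [Fintype.linearCombination_apply] using ha)
    filter_upwards [this] with t ht
    simpa [Fintype.linearCombination_apply] using ht
  obtain ⟨δ, hδ, hδ₀⟩ :=
    ((hnhds.filter_mono (nhdsWithin_le_nhds (s := Ioi 0))).and self_mem_nhdsWithin).exists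
  exact ⟨δ, hδ₀, hδ⟩

end StrongTopology

theorem cone_strongOpen_iff (K : Type*) [Field K] [LinearOrder K] [IsStrictOrderedRing K] [TopologicalSpace K]
    [OrderTopology K] {V : Type*} [AddCommGroup V] [Module K V]
    (C : Set V) (hC : IsCone K C) :
    StrongOpen K C ↔ ∀ a ∈ C, ∀ x : V, ∃ δ₀ : K, 0 < δ₀ ∧ a + δ₀ • x ∈ C := by
  refine ⟨fun hopen a ha x => hopen.exists_pos_add_smul_mem ha x, fun h n φ => ?_⟩
  refine (hC.convex.linear_preimage φ).isOpen_of_forall_exists_add_smul_mem fun a ha x => ?_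
  simpa using h (φ a) ha (φ x)
end

section
/- Let P be a vector space over ℚ, let x₁, …, x_r ∈ P, let b₁, …, b_m ∈ ℚ, and let A be an r×m matrix with rational entries. Suppose λ₁, …, λ_r are nonnegative real numbers with (λ₁, …, λ_r)·A = (b₁, …, b_m), and suppose x := λ₁x₁ + ⋯ + λ_r x_r lies in P. Then there exist nonnegative rationals λ′₁, …, λ′_r such that x = λ′₁x₁ + ⋯ + λ′_r x_r and (λ′₁, …, λ′_r)·A = (b₁, …, b_m). Moreover, if all λ_i are positive, the λ′_i can be chosen positive. -/
/-!
Pick a ℚ-linear functional `π : ℝ → ℚ` that is positive at `1` and at every positive `λᵢ`, and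
put `λ'ᵢ = π λᵢ / π 1`. The equations satisfied by `λ` have rational coefficients, so applying `π`
to `λ · A = b` and `π ⊗ id` to the identity in `ℝ ⊗[ℚ] P` shows that `λ'` satisfies them too.

Such a `π` exists because, in a ℚ-basis `(e k)` of `ℝ`, a ℚ-linear map `ℝ → ℝ` may take arbitrary
values `g k` on the basis, and its value at a fixed `y` depends continuously on `g`. The choice
`g = e` gives the identity, which is positive at the positive reals, so every rational `g` close
enough to `e` does as well.
-/

open TensorProduct

theorem Module.Basis.ratCast_constr_apply {K ι : Type*} [DivisionRing K] [CharZero K]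
    (B : Module.Basis ι ℚ K) (g : ι → ℚ) (y : K) :
    (B.constr ℚ g y : K) = B.constr ℚ (fun i => (g i : K)) y := by
  simp [Module.Basis.constr_apply, Finsupp.sum, Rat.smul_def]

theorem Module.Basis.continuous_constr_apply {K ι : Type*} [DivisionRing K] [CharZero K]
    [TopologicalSpace K] [IsTopologicalRing K] (B : Module.Basis ι ℚ K) (y : K) :
    Continuous fun g : ι → K => B.constr ℚ g y := by
  simp only [Module.Basis.constr_apply, Finsupp.sum, Rat.smul_def]
  fun_prop

theorem exists_ratLinearMap_pos {K : Type*} [Field K] [LinearOrder K] [IsStrictOrderedRing K]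
    [Archimedean K] [TopologicalSpace K] [OrderTopology K] (s : Finset K) :
    ∃ π : K →ₗ[ℚ] ℚ, ∀ y ∈ s, 0 < y → 0 < π y := by
  let B := Module.Basis.ofVectorSpace ℚ K
  let O : Set (_ → K) := ⋂ y ∈ s, {g | 0 < y → 0 < B.constr ℚ g y}
  have hO : IsOpen O := by
    refine isOpen_biInter_finset fun y _ => ?_
    by_cases hy : 0 < y
    · simpa [hy] using isOpen_lt continuous_const (B.continuous_constr_apply y)
    · simp [hy]
  have hB : ⇑B ∈ O := by
    have hid : B.constr ℚ ⇑B = LinearMap.id := B.constr_self ℚ LinearMap.id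
    simp [O, hid]
  obtain ⟨g, hg⟩ := (DenseRange.piMap fun _ => Rat.denseRange_cast).exists_mem_open hO ⟨_, hB⟩
  refine ⟨B.constr ℚ g, fun y hy hpos => ?_⟩
  have := Set.mem_iInter₂.mp hg y hy hpos
  exact_mod_cast (B.ratCast_constr_apply g y).symm ▸ this

theorem smul_eq_sum_of_one_tmul_eq_sum {R S M ι : Type*} [CommSemiring R] [Semiring S]
    [Algebra R S] [AddCommMonoid M] [Module R M] [Fintype ι] (φ : S →ₗ[R] R)
    {c : ι → S} {x : ι → M} {p : M}
    (hp : ((1 : S) ⊗ₜ[R] p : S ⊗[R] M) = ∑ i, c i • ((1 : S) ⊗ₜ[R] x i)) :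
    φ 1 • p = ∑ i, φ (c i) • x i := by
  simpa [smul_tmul', map_sum] using
    congrArg (TensorProduct.lift ((LinearMap.lsmul R M).comp φ)) hp

theorem map_mul_ratCast {K : Type*} [DivisionRing K] [CharZero K] (φ : K →ₗ[ℚ] ℚ) (y : K)
    (q : ℚ) : φ (y * q) = φ y * q := by
  rw [← (Rat.cast_commute q y).eq, ← Rat.smul_def, map_smul, smul_eq_mul, mul_comm]

theorem rational_combination_of_real (P : Type*) [AddCommGroup P] [Module ℚ P]
    (r m : ℕ) (x : Fin r → P) (b : Fin m → ℚ) (A : Matrix (Fin r) (Fin m) ℚ)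
    (lam : Fin r → ℝ) (hlam : ∀ i, 0 ≤ lam i)
    (hA : ∀ j, ∑ i, lam i * (A i j : ℝ) = (b j : ℝ))
    (p : P)
    (hp : ((1 : ℝ) ⊗ₜ[ℚ] p : ℝ ⊗[ℚ] P) = ∑ i, lam i • ((1 : ℝ) ⊗ₜ[ℚ] x i : ℝ ⊗[ℚ] P)) :
    ∃ lam' : Fin r → ℚ, (∀ i, 0 ≤ lam' i) ∧
      ((∀ i, 0 < lam i) → ∀ i, 0 < lam' i) ∧
      p = ∑ i, lam' i • x i ∧ ∀ j, ∑ i, lam' i * A i j = b j := by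
  obtain ⟨π, hπ⟩ := exists_ratLinearMap_pos (insert 1 (Finset.univ.image lam))
  have hπ1 : 0 < π 1 := hπ 1 (Finset.mem_insert_self _ _) one_pos
  have hπ_pos : ∀ i, 0 < lam i → 0 < π (lam i) := fun i =>
    hπ _ (Finset.mem_insert_of_mem (Finset.mem_image_of_mem _ (Finset.mem_univ i)))
  have hπ_nonneg : ∀ i, 0 ≤ π (lam i) := fun i => by
    rcases (hlam i).eq_or_lt with h | h
    · rw [← h, map_zero]
    · exact (hπ_pos i h).le
  refine ⟨fun i => π (lam i) / π 1, fun i => div_nonneg (hπ_nonneg i) hπ1.le,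
    fun hpos i => div_pos (hπ_pos i (hpos i)) hπ1, ?_, fun j => ?_⟩
  · have hp' := smul_eq_sum_of_one_tmul_eq_sum π hp
    simp_rw [div_eq_inv_mul, mul_smul, ← Finset.smul_sum, ← hp', smul_smul,
      inv_mul_cancel₀ hπ1.ne', one_smul]
  · have hb := congrArg π (hA j)
    rw [map_sum, ← one_mul (b j : ℝ), map_mul_ratCast] at hb
    simp_rw [map_mul_ratCast] at hb
    simp_rw [div_mul_eq_mul_div, ← Finset.sum_div, hb]
    field_simp
end

section
/- Let P be a ℚ-vector space, V = P ⊗_ℚ ℝ, and C a cone in P. Then the real cone Cone_ℝ(C) generated by C in V satisfies Cone_ℝ(C) ∩ P = C, where P is identified with its image in V. -/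
open TensorProduct

/-- The cone generated by `S`: positive linear combinations of elements of `S`. -/
def coneGen (K : Type*) [Field K] [LinearOrder K] [IsStrictOrderedRing K] {V : Type*} [AddCommGroup V]
    [Module K V] (S : Set V) : Set V :=
  { v | ∃ (n : ℕ) (a : Fin (n + 1) → V) (l : Fin (n + 1) → K),
      (∀ i, a i ∈ S) ∧ (∀ i, 0 < l i) ∧ v = ∑ i, l i • a i }

/-!
If `1 ⊗ p = ∑ λᵢ ⊗ cᵢ` with real `λᵢ > 0` and `cᵢ ∈ C`, apply `f ⊗ id` for a `ℚ`-linear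
`f : ℝ → ℚ` that is positive at `1` and at every `λᵢ`: this gives `f 1 • p = ∑ f λᵢ • cᵢ` in `P`,
so `p ∈ C`. Such an `f` exists because, for a `ℚ`-basis `(e_b)` of `ℝ`, the functionals
`x ↦ ∑ x_b r_b` with real `r_b` depend continuously on `r`, equal the identity at `r = e`, and are
`ℚ`-valued for rational `r`, which are dense.
-/

open Module in
theorem exists_rat_linearMap_pos (s : Finset ℝ) (hs : ∀ x ∈ s, 0 < x) :
    ∃ f : ℝ →ₗ[ℚ] ℚ, ∀ x ∈ s, 0 < f x := by
  set B := Basis.ofVectorSpace ℚ ℝ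
  set F : (Basis.ofVectorSpaceIndex ℚ ℝ → ℝ) → ℝ → ℝ :=
    fun r x => Finsupp.linearCombination ℚ r (B.repr x)
  have hF_cont : ∀ x, Continuous fun r => F r x := by
    intro x
    simp only [F, Finsupp.linearCombination_apply, Finsupp.sum, Rat.smul_def]
    fun_prop
  have hF_cast : ∀ (q : Basis.ofVectorSpaceIndex ℚ ℝ → ℚ) x,
      F (fun b => (q b : ℝ)) x = (Finsupp.linearCombination ℚ q ∘ₗ B.repr.toLinearMap) x := by
    intro q x
    simp [F, Finsupp.linearCombination_apply, Finsupp.sum, Rat.smul_def]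
  obtain ⟨q, hq⟩ := (DenseRange.piMap fun _ => Rat.denseRange_cast).exists_mem_open
    (isOpen_biInter_finset fun x _ => isOpen_lt continuous_const (hF_cont x))
    ⟨B, Set.mem_iInter₂.2 fun x hx => (B.linearCombination_repr x).symm ▸ hs x hx⟩
  refine ⟨Finsupp.linearCombination ℚ q ∘ₗ B.repr.toLinearMap, fun x hx => ?_⟩
  have hqx : 0 < F (fun b => (q b : ℝ)) x := Set.mem_iInter₂.1 hq x hx
  rw [hF_cast] at hqx
  exact_mod_cast hqx

theorem IsCone.coneGen_subset {K : Type*} [Field K] [LinearOrder K] [IsStrictOrderedRing K]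
    {V : Type*} [AddCommGroup V] [Module K V] {C : Set V} (hC : IsCone K C) :
    coneGen K C ⊆ C := by
  rintro _ ⟨n, a, l, ha, hl, rfl⟩
  induction n with
  | zero => simpa using hC.2 _ (ha 0) _ (hl 0)
  | succ n ih =>
    rw [Fin.sum_univ_castSucc]
    exact hC.1 _ (ih _ _ (fun i => ha _) fun i => hl _) _ (hC.2 _ (ha _) _ (hl _))

theorem subset_coneGen (K : Type*) [Field K] [LinearOrder K] [IsStrictOrderedRing K]
    {V : Type*} [AddCommGroup V] [Module K V] (S : Set V) : S ⊆ coneGen K S :=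
  fun v hv => ⟨0, fun _ => v, fun _ => 1, fun _ => hv, fun _ => one_pos, by simp⟩

theorem mem_coneGen_of_one_tmul_mem_coneGen {P : Type*} [AddCommGroup P] [Module ℚ P]
    {C : Set P} {p : P}
    (hp : (1 : ℝ) ⊗ₜ[ℚ] p ∈ coneGen ℝ ((fun c : P => (1 : ℝ) ⊗ₜ[ℚ] c) '' C)) :
    p ∈ coneGen ℚ C := by
  obtain ⟨n, a, l, ha, hl, hsum⟩ := hp
  choose c hc hca using ha
  obtain rfl : a = fun i => (1 : ℝ) ⊗ₜ[ℚ] c i := funext fun i => (hca i).symm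
  obtain ⟨f, hf⟩ := exists_rat_linearMap_pos (insert 1 (Finset.univ.image l)) (by
    simpa using hl)
  have hf1 : 0 < f 1 := hf 1 (by simp)
  have hfl : ∀ i, 0 < f (l i) := fun i => hf _ (by simp)
  have hfp : f 1 • p = ∑ i, f (l i) • c i := by
    simpa [TensorProduct.smul_tmul'] using
      congrArg (fun v => TensorProduct.lid ℚ P (f.rTensor P v)) hsum
  refine ⟨n, c, fun i => f (l i) / f 1, hc, fun i => div_pos (hfl i) hf1, ?_⟩
  rw [← inv_smul_smul₀ hf1.ne' p, hfp, Finset.smul_sum]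
  simp only [smul_smul, div_eq_inv_mul]

theorem coneGenReal_inter_rational (P : Type*) [AddCommGroup P] [Module ℚ P]
    (C : Set P) (hC : IsCone ℚ C) :
    coneGen ℝ ((fun p : P => ((1 : ℝ) ⊗ₜ[ℚ] p : ℝ ⊗[ℚ] P)) '' C) ∩
        Set.range (fun p : P => ((1 : ℝ) ⊗ₜ[ℚ] p : ℝ ⊗[ℚ] P))
      = (fun p : P => ((1 : ℝ) ⊗ₜ[ℚ] p : ℝ ⊗[ℚ] P)) '' C := by
  refine Set.Subset.antisymm ?_
    (Set.subset_inter (subset_coneGen ℝ _) (Set.image_subset_range _ _))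
  rintro _ ⟨hv, p, rfl⟩
  exact ⟨p, hC.coneGen_subset (mem_coneGen_of_one_tmul_mem_coneGen hv), rfl⟩
end

section
/- Let P be a ℚ-vector space and V = P ⊗_ℚ ℝ. If C is a cone in P that is open in P (in the strong topology over ℚ), then Cone_ℝ(C) is open in V (in the strong topology over ℝ). -/
open TensorProduct

/-!
A point of `Cone_ℝ(1 ⊗ C)` involves finitely many `pᵢ ∈ C`, and for a linear `φ : ℝⁿ → ℝ ⊗ P`
the vectors `φ eⱼ` lie in `ℝ ⊗ W` for some finite-dimensional `W ⊆ P`. Choosing coordinates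
`ψ : ℚᵐ ≃ W` (and using that `ψ ⊗ ℝ` stays injective), the question moves to `ℝᵐ`, where the
generators are the points of the open set `D = ψ⁻¹ C ⊆ ℚᵐ`. Around each point of `D` a cube with
rational vertices lies in `D`; its convex hull is a real neighbourhood inside `Cone_ℝ(D)`, and a
cone that is a neighbourhood of each of its generators is open.
-/

open scoped Pointwise

section Cone

variable {K : Type*} [Field K] [LinearOrder K] [IsStrictOrderedRing K]
  {V W : Type*} [AddCommGroup V] [Module K V] [AddCommGroup W] [Module K W] {S T C : Set V}

lemma subset_coneGen_s4 : S ⊆ coneGen K S := fun s hs =>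
  ⟨0, fun _ => s, fun _ => 1, fun _ => hs, fun _ => one_pos, by simp⟩

lemma IsCone.sum_mem (hC : IsCone K C) {n : ℕ} {a : Fin (n + 1) → V} {l : Fin (n + 1) → K}
    (ha : ∀ i, a i ∈ C) (hl : ∀ i, 0 < l i) : ∑ i, l i • a i ∈ C := by
  induction n with
  | zero => simpa using hC.2 _ (ha 0) _ (hl 0)
  | succ n ih =>
    rw [Fin.sum_univ_succ]
    exact hC.1 _ (hC.2 _ (ha 0) _ (hl 0)) _ (ih (fun i => ha i.succ) fun i => hl i.succ)

lemma coneGen_min (hS : S ⊆ C) (hC : IsCone K C) : coneGen K S ⊆ C := by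
  rintro _ ⟨n, a, l, ha, hl, rfl⟩
  exact hC.sum_mem (fun i => hS (ha i)) hl

lemma coneGen_mono (h : S ⊆ T) : coneGen K S ⊆ coneGen K T := by
  rintro _ ⟨n, a, l, ha, hl, rfl⟩
  exact ⟨n, a, l, fun i => h (ha i), hl, rfl⟩

lemma isCone_coneGen (S : Set V) : IsCone K (coneGen K S) := by
  refine ⟨?_, ?_⟩
  · rintro _ ⟨n₁, a₁, l₁, ha₁, hl₁, rfl⟩ _ ⟨n₂, a₂, l₂, ha₂, hl₂, rfl⟩
    have hn : n₁ + n₂ + 1 + 1 = n₁ + 1 + (n₂ + 1) := by omega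
    refine ⟨n₁ + n₂ + 1, Fin.append a₁ a₂ ∘ Fin.cast hn, Fin.append l₁ l₂ ∘ Fin.cast hn,
      fun i => ?_, fun i => ?_, ?_⟩
    · exact Fin.addCases (motive := fun j => Fin.append a₁ a₂ j ∈ S)
        (fun j => by simpa using ha₁ j) (fun j => by simpa using ha₂ j) _
    · exact Fin.addCases (motive := fun j => 0 < Fin.append l₁ l₂ j)
        (fun j => by simpa using hl₁ j) (fun j => by simpa using hl₂ j) _
    · rw [← (finCongr hn).symm.sum_comp]
      simp [Fin.sum_univ_add]
  · rintro _ ⟨n, a, l, ha, hl, rfl⟩ c hc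
    refine ⟨n, a, fun i => c * l i, ha, fun i => mul_pos hc (hl i), ?_⟩
    simp [Finset.smul_sum, smul_smul]

lemma coneGen_image (f : V →ₗ[K] W) (S : Set V) : coneGen K (f '' S) = f '' coneGen K S := by
  apply Set.Subset.antisymm
  · rintro _ ⟨n, b, l, hb, hl, rfl⟩
    choose a ha hab using hb
    exact ⟨_, ⟨n, a, l, ha, hl, rfl⟩, by simp [hab]⟩
  · rintro _ ⟨_, ⟨n, a, l, ha, hl, rfl⟩, rfl⟩
    exact ⟨n, f ∘ a, l, fun i => ⟨a i, ha i, rfl⟩, hl, by simp⟩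

lemma exists_finset_of_mem_coneGen {v : V} (hv : v ∈ coneGen K S) :
    ∃ T : Finset V, ↑T ⊆ S ∧ v ∈ coneGen K (T : Set V) := by
  classical
  obtain ⟨n, a, l, ha, hl, rfl⟩ := hv
  exact ⟨Finset.univ.image a, by simpa [Set.range_subset_iff] using ha,
    n, a, l, fun i => by simp, hl, rfl⟩

lemma IsCone.convex_s4 (hC : IsCone K C) : Convex K C := by
  intro x hx y hy a b ha hb hab
  rcases ha.eq_or_lt with rfl | ha
  · simpa [show b = 1 by simpa using hab] using hy
  rcases hb.eq_or_lt with rfl | hb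
  · simpa [show a = 1 by simpa using hab] using hx
  exact hC.1 _ (hC.2 _ hx _ ha) _ (hC.2 _ hy _ hb)

lemma convexHull_subset_coneGen (S : Set V) : convexHull K S ⊆ coneGen K S :=
  convexHull_min subset_coneGen_s4 (isCone_coneGen S).convex_s4

variable [TopologicalSpace V] [IsTopologicalAddGroup V] [ContinuousConstSMul K V]

lemma IsCone.interior (hC : IsCone K C) : IsCone K (interior C) := by
  refine ⟨fun x hx y hy => ?_, fun x hx c hc => ?_⟩
  · have hCC : C + C ⊆ C := Set.add_subset_iff.mpr hC.1
    exact interior_mono hCC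
      (subset_interior_add_left (s := C) (Set.add_mem_add hx (interior_subset hy)))
  · have hcC : c • C ⊆ C := Set.smul_set_subset_iff.mpr fun x hx => hC.2 x hx c hc
    exact interior_mono hcC ((interior_smul₀ hc.ne' C).symm ▸ Set.smul_mem_smul_set hx)

lemma isOpen_coneGen (hS : S ⊆ interior (coneGen K S)) : IsOpen (coneGen K S) :=
  (coneGen_min hS (isCone_coneGen S).interior).antisymm interior_subset ▸ isOpen_interior

end Cone

lemma algebraMap_mem_interior_convexHull_image {ι : Type*} [Fintype ι] {D : Set (ι → ℚ)}
    (hD : IsOpen D) {d : ι → ℚ} (hd : d ∈ D) :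
    algebraMap (ι → ℚ) (ι → ℝ) d ∈
      interior (convexHull ℝ (algebraMap (ι → ℚ) (ι → ℝ) '' D)) := by
  obtain ⟨ε, hε, hball⟩ := Metric.isOpen_iff.mp hD d hd
  obtain ⟨δ, hδ, hδε⟩ := exists_rat_btwn hε
  set cube := Set.univ.pi fun i => ({d i - δ, d i + δ} : Set ℚ)
  have hcube : cube ⊆ D := by
    refine fun x hx => hball ((dist_pi_lt_iff hε).2 fun i => ?_)
    obtain h | h : x i = d i - δ ∨ x i = d i + δ := hx i trivial
    all_goals
      rw [h, Rat.dist_eq]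
      push_cast
      simpa [abs_of_pos hδ] using hδε
  have hhull : convexHull ℝ (algebraMap (ι → ℚ) (ι → ℝ) '' cube) =
      Set.univ.pi fun i => Set.Icc ((d i : ℝ) - δ) (d i + δ) := by
    rw [show ⇑(algebraMap (ι → ℚ) (ι → ℝ)) = Pi.map fun _ => algebraMap ℚ ℝ from rfl,
      Set.piMap_image_univ_pi, convexHull_pi]
    congr! with i
    simp only [Set.image_pair, convexHull_pair, eq_ratCast, Rat.cast_sub, Rat.cast_add]
    exact segment_eq_Icc (by linarith)
  refine interior_mono (convexHull_mono (Set.image_mono hcube)) ?_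
  rw [hhull, mem_interior_iff_mem_nhds]
  exact set_pi_mem_nhds Set.finite_univ fun i _ => Icc_mem_nhds
    (show (d i : ℝ) - δ < d i by linarith) (show (d i : ℝ) < d i + δ by linarith)

lemma isOpen_coneGen_algebraMap_image {ι : Type*} [Fintype ι] {D : Set (ι → ℚ)}
    (hD : IsOpen D) :
    IsOpen (coneGen ℝ (algebraMap (ι → ℚ) (ι → ℝ) '' D)) :=
  isOpen_coneGen <| Set.image_subset_iff.2 fun _ hd =>
    interior_mono (convexHull_subset_coneGen _) (algebraMap_mem_interior_convexHull_image hD hd)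

section BaseChange

variable (L : Type*) {K P ι : Type*} [Field K] [Field L] [Algebra K L]
  [AddCommGroup P] [Module K P] [Fintype ι] [DecidableEq ι]

def piBaseChange (ψ : (ι → K) →ₗ[K] P) : (ι → L) →ₗ[L] L ⊗[K] P :=
  ψ.baseChange L ∘ₗ (piScalarRight K L L ι).symm.toLinearMap

lemma piBaseChange_algebraMap (ψ : (ι → K) →ₗ[K] P) (d : ι → K) :
    piBaseChange L ψ (algebraMap (ι → K) (ι → L) d) = 1 ⊗ₜ ψ d := by
  simp [piBaseChange, piScalarRight_symm_algebraMap]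

lemma piBaseChange_injective {ψ : (ι → K) →ₗ[K] P} (hψ : Function.Injective ψ) :
    Function.Injective (piBaseChange L ψ) := by
  rw [piBaseChange, LinearMap.coe_comp, LinearMap.baseChange_eq_ltensor]
  exact (Module.Flat.lTensor_preserves_injective_linearMap ψ hψ).comp (LinearEquiv.injective _)

lemma exists_piBaseChange_range_superset {F : Set (L ⊗[K] P)} (hF : F.Finite) {T : Set P}
    (hT : T.Finite) : ∃ (m : ℕ) (ψ : (Fin m → K) →ₗ[K] P), Function.Injective ψ ∧
      T ⊆ LinearMap.range ψ ∧ F ⊆ LinearMap.range (piBaseChange L ψ) := by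
  obtain ⟨W₀, _, hFW₀⟩ := TensorProduct.exists_finite_submodule_right_of_setFinite F hF
  set W := W₀ ⊔ Submodule.span K T
  have : Module.Finite K (Submodule.span K T) := Module.Finite.span_of_finite K hT
  let e := (Module.finBasis K W).equivFun.symm
  refine ⟨Module.finrank K W, W.subtype ∘ₗ e.toLinearMap,
    W.injective_subtype.comp e.injective, ?_, ?_⟩
  · rw [LinearMap.range_comp_of_range_eq_top _ e.range, Submodule.range_subtype]
    exact Submodule.subset_span.trans (le_sup_right (a := W₀))
  · intro v hv
    obtain ⟨t, rfl⟩ := hFW₀ hv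
    obtain ⟨u, hu⟩ := LinearMap.lTensor_surjective L e.surjective
      ((Submodule.inclusion (le_sup_left (b := Submodule.span K T))).lTensor L t)
    refine ⟨piScalarRight K L L _ u, ?_⟩
    rw [piBaseChange, LinearMap.comp_apply, LinearEquiv.coe_coe, LinearEquiv.symm_apply_apply,
      LinearMap.baseChange_eq_ltensor, LinearMap.lTensor_comp_apply, hu,
      ← LinearMap.lTensor_comp_apply]
    rfl

lemma exists_piBaseChange_comp_eq {n : ℕ} (φ : (Fin n → L) →ₗ[L] L ⊗[K] P) {T : Set P}
    (hT : T.Finite) : ∃ (m : ℕ) (ψ : (Fin m → K) →ₗ[K] P) (φ' : (Fin n → L) →ₗ[L] (Fin m → L)),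
      Function.Injective (piBaseChange L ψ) ∧ T ⊆ Set.range ψ ∧
        piBaseChange L ψ ∘ₗ φ' = φ := by
  obtain ⟨m, ψ, hψ, hTψ, hφψ⟩ :=
    exists_piBaseChange_range_superset L (Set.finite_range fun j => φ (Pi.single j 1)) hT
  have hinj := piBaseChange_injective L hψ
  obtain ⟨g, hg⟩ :=
    (piBaseChange L ψ).exists_leftInverse_of_injective (LinearMap.ker_eq_bot.2 hinj)
  refine ⟨m, ψ, g ∘ₗ φ, hinj, LinearMap.coe_range ψ ▸ hTψ, LinearMap.ext fun x => ?_⟩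
  obtain ⟨y, hy⟩ : φ x ∈ LinearMap.range (piBaseChange L ψ) := by
    rw [LinearMap.pi_apply_eq_sum_univ φ x]
    refine Submodule.sum_mem _ fun j _ => Submodule.smul_mem _ _ (hφψ ⟨j, ?_⟩)
    exact congrArg φ <| funext fun i => by simp [Pi.single_apply, eq_comm]
  rw [LinearMap.comp_apply, LinearMap.comp_apply, ← hy, ← LinearMap.comp_apply g, hg,
    LinearMap.id_apply]

end BaseChange

theorem coneGenReal_strongOpen_general (P : Type*) [AddCommGroup P] [Module ℚ P]
    (C : Set P) (hopen : StrongOpen ℚ C) :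
    StrongOpen ℝ (coneGen ℝ ((fun p : P => ((1 : ℝ) ⊗ₜ[ℚ] p : ℝ ⊗[ℚ] P)) '' C)) := by
  classical
  intro n φ
  refine isOpen_iff_mem_nhds.2 fun x hx => ?_
  obtain ⟨T, hTC, hxT⟩ := exists_finset_of_mem_coneGen hx
  obtain ⟨T', hT'C, rfl⟩ := Finset.subset_set_image_iff.1 hTC
  rw [Finset.coe_image] at hxT
  obtain ⟨m, ψ, φ', hinj, hT'ψ, hφ⟩ := exists_piBaseChange_comp_eq ℝ φ T'.finite_toSet
  set H := coneGen ℝ (algebraMap (Fin m → ℚ) (Fin m → ℝ) '' (ψ ⁻¹' C))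
  have hψH : piBaseChange ℝ ψ '' H = coneGen ℝ ((1 ⊗ₜ ·) '' (C ∩ Set.range ψ)) := by
    rw [← coneGen_image, Set.image_image]
    simp_rw [piBaseChange_algebraMap]
    rw [← Set.image_image (1 ⊗ₜ ·) ψ, Set.image_preimage_eq_inter_range]
  have hxH : φ' x ∈ H := by
    rw [← hinj.mem_set_image, ← LinearMap.comp_apply, hφ, hψH]
    exact coneGen_mono (Set.image_mono (Set.subset_inter hT'C hT'ψ)) hxT
  have hH : IsOpen H := isOpen_coneGen_algebraMap_image (hopen m ψ)
  filter_upwards [φ'.continuous_of_finiteDimensional.continuousAt.preimage_mem_nhds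
    (hH.mem_nhds hxH)] with y hy
  have hφy : φ y ∈ piBaseChange ℝ ψ '' H := ⟨φ' y, hy, by rw [← hφ]; rfl⟩
  rw [hψH] at hφy
  exact coneGen_mono (Set.image_mono Set.inter_subset_left) hφy

theorem coneGenReal_strongOpen (P : Type*) [AddCommGroup P] [Module ℚ P]
    (C : Set P) (hC : IsCone ℚ C) (hopen : StrongOpen ℚ C) :
    StrongOpen ℝ (coneGen ℝ ((fun p : P => ((1 : ℝ) ⊗ₜ[ℚ] p : ℝ ⊗[ℚ] P)) '' C)) :=
  coneGenReal_strongOpen_general P C hopen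
end

section
/- Let M be a ℤ-module, ι : M → M ⊗_ℚ the natural map, and A an open sub-semigroup of M, meaning: for any a ∈ A and x ∈ M there is a positive integer n with n·a + x ∈ A. Then Cone_ℚ(ι(A)) is an open set in M ⊗_ℤ ℚ in the strong topology. -/
/-!
Write `ι x = 1 ⊗ x` and `C` for the cone. `C` is convex, and every point of `C` is internal
along every line: split `v ∈ C` as `(v - c ι(a)) + c ι(a)` with both parts in `C`, and write a
direction `w` as `N w = ι(x)`; openness of `A` gives `m > 0` with `m a + x ∈ A`, and then
`v + (c N / m) w = (v - c ι(a)) + (c / m) ι(m a + x) ∈ C`. In `ℚⁿ` a convex set with this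
property is open, because every `q` near `p` is the barycentre of the points
`p + n (qᵢ - pᵢ) eᵢ`, which lie in the set once `q` is close enough to `p`.
-/

open TensorProduct

open Filter Topology

/-- Every point of `U` is an internal (core) point of `U`. -/
def IsAlgebraicallyOpen (K : Type*) [Field K] [LinearOrder K] {V : Type*} [AddCommGroup V]
    [Module K V] (U : Set V) : Prop :=
  ∀ v ∈ U, ∀ w : V, ∃ ε : K, 0 < ε ∧ v + ε • w ∈ U

section AlgebraicallyOpen

variable {K : Type*} [Field K] [LinearOrder K]
  {E V : Type*} [AddCommGroup E] [Module K E] [AddCommGroup V] [Module K V] {U : Set V}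

lemma IsAlgebraicallyOpen.preimage (hU : IsAlgebraicallyOpen K U) (f : E →ₗ[K] V) :
    IsAlgebraicallyOpen K (f ⁻¹' U) := fun v hv w => by
  simpa using hU (f v) hv (f w)

variable [IsStrictOrderedRing K] [TopologicalSpace K] [OrderTopology K]

lemma Convex.eventually_add_smul_mem (hc : Convex K U) (hU : IsAlgebraicallyOpen K U)
    {v : V} (hv : v ∈ U) (w : V) : ∀ᶠ t in 𝓝 (0 : K), v + t • w ∈ U := by
  obtain ⟨ε₁, hε₁, h₁⟩ := hU v hv w
  obtain ⟨ε₂, hε₂, h₂⟩ := hU v hv (-w)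
  filter_upwards [Ioo_mem_nhds (neg_neg_of_pos hε₂) hε₁] with t ⟨ht₂, ht₁⟩
  rcases le_total 0 t with ht | ht
  · have := hc.add_smul_mem hv h₁ ⟨div_nonneg ht hε₁.le, (div_le_one hε₁).2 ht₁.le⟩
    rwa [smul_smul, div_mul_cancel₀ _ hε₁.ne'] at this
  · have := hc.add_smul_mem hv h₂
      ⟨div_nonneg (neg_nonneg.2 ht) hε₂.le, (div_le_one hε₂).2 (neg_lt.1 ht₂).le⟩
    rwa [smul_smul, div_mul_cancel₀ _ hε₂.ne', smul_neg, ← neg_smul, neg_neg] at this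

lemma Convex.isOpen_of_isAlgebraicallyOpen {ι : Type*} [Fintype ι] {U : Set (ι → K)}
    (hc : Convex K U) (hU : IsAlgebraicallyOpen K U) : IsOpen U := by
  classical
  refine isOpen_iff_mem_nhds.2 fun p hp => ?_
  rcases isEmpty_or_nonempty ι with hι | hι
  · exact Eventually.of_forall fun q => Subsingleton.elim p q ▸ hp
  set n : K := (Fintype.card ι : K)
  have hn : 0 < n := Nat.cast_pos.2 Fintype.card_pos
  have hcoord : ∀ i, ∀ᶠ q in 𝓝 p, p + (q i - p i) • (n • Pi.single i 1) ∈ U := fun i =>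
    (tendsto_sub_nhds_zero_iff.2 ((continuous_apply i).tendsto p)).eventually
      (hc.eventually_add_smul_mem hU hp _)
  filter_upwards [eventually_all.2 hcoord] with q hq
  have hbary : q = ∑ i, n⁻¹ • (p + (q i - p i) • (n • Pi.single i 1)) := by
    ext j
    simp [Finset.sum_apply, Pi.single_apply, Finset.sum_add_distrib, mul_comm (q _ - p _), n]
  rw [hbary]
  exact hc.sum_mem (fun _ _ => inv_nonneg.2 hn.le)
    (by simp [n, Finset.card_univ, hn.ne']) fun i _ => hq i

lemma Convex.strongOpen_of_isAlgebraicallyOpen (hc : Convex K U)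
    (hU : IsAlgebraicallyOpen K U) : StrongOpen K U := fun _ φ =>
  (hc.linear_preimage φ).isOpen_of_isAlgebraicallyOpen (hU.preimage φ)

end AlgebraicallyOpen

section Cone

variable {K : Type*} [Field K] [LinearOrder K] [IsStrictOrderedRing K]
  {V : Type*} [AddCommGroup V] [Module K V] {S : Set V}

lemma smul_mem_coneGen_of_mem {s : V} (hs : s ∈ S) {c : K} (hc : 0 < c) :
    c • s ∈ coneGen K S :=
  ⟨0, ![s], ![c], by simp [hs], by simp [hc], by simp⟩

lemma add_smul_mem_coneGen {s v : V} {c : K} (hs : s ∈ S) (hc : 0 < c)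
    (hv : v ∈ coneGen K S) : c • s + v ∈ coneGen K S := by
  obtain ⟨n, a, l, ha, hl, rfl⟩ := hv
  refine ⟨n + 1, Fin.cons s a, Fin.cons c l, ?_, ?_, by simp [Fin.sum_univ_succ]⟩
  · intro i; induction i using Fin.cases <;> simp [hs, ha]
  · intro i; induction i using Fin.cases <;> simp [hc, hl]

lemma add_mem_coneGen {u v : V} (hu : u ∈ coneGen K S) (hv : v ∈ coneGen K S) :
    u + v ∈ coneGen K S := by
  obtain ⟨n, a, l, ha, hl, rfl⟩ := hu
  induction n with
  | zero => simpa using add_smul_mem_coneGen (ha 0) (hl 0) hv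
  | succ m ih =>
    rw [Fin.sum_univ_succ, add_assoc]
    exact add_smul_mem_coneGen (ha 0) (hl 0)
      (ih (fun i => a i.succ) (fun i => l i.succ) (fun i => ha i.succ) (fun i => hl i.succ))

lemma smul_mem_coneGen {v : V} {c : K} (hc : 0 < c) (hv : v ∈ coneGen K S) :
    c • v ∈ coneGen K S := by
  obtain ⟨n, a, l, ha, hl, rfl⟩ := hv
  exact ⟨n, a, fun i => c * l i, ha, fun i => mul_pos hc (hl i), by
    simp [Finset.smul_sum, smul_smul]⟩

lemma convex_coneGen : Convex K (coneGen K S) :=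
  (⟨coneGen K S, fun _ hc _ hv => smul_mem_coneGen hc hv,
    fun _ hu _ hv => add_mem_coneGen hu hv⟩ : ConvexCone K V).convex

lemma exists_sub_smul_mem_coneGen {v : V} (hv : v ∈ coneGen K S) :
    ∃ s ∈ S, ∃ c : K, 0 < c ∧ v - c • s ∈ coneGen K S := by
  obtain ⟨n, a, l, ha, hl, rfl⟩ := hv
  refine ⟨a 0, ha 0, l 0 / 2, half_pos (hl 0),
    n, a, Fin.cons (l 0 / 2) (fun i => l i.succ), ha, ?_, ?_⟩
  · intro i
    induction i using Fin.cases
    · simpa using hl 0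
    · simpa using hl _
  · simp only [Fin.sum_univ_succ, Fin.cons_zero, Fin.cons_succ]
    module

end Cone

section RationalTensor

variable {M : Type*} [AddCommGroup M]

lemma one_tmul_nsmul (k : ℕ) (x : M) :
    (1 : ℚ) ⊗ₜ[ℤ] (k • x) = (k : ℚ) • ((1 : ℚ) ⊗ₜ[ℤ] x) := by
  rw [tmul_smul, Nat.cast_smul_eq_nsmul]

lemma exists_natCast_smul_eq_one_tmul (w : ℚ ⊗[ℤ] M) :
    ∃ N : ℕ, 0 < N ∧ ∃ x : M, (N : ℚ) • w = (1 : ℚ) ⊗ₜ[ℤ] x := by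
  induction w using TensorProduct.induction_on with
  | zero => exact ⟨1, one_pos, 0, by simp⟩
  | tmul q x =>
    refine ⟨q.den, q.pos, q.num • x, ?_⟩
    rw [tmul_smul, smul_tmul', ← Int.cast_smul_eq_zsmul ℚ, smul_tmul', smul_eq_mul,
      smul_eq_mul, mul_one, mul_comm, Rat.mul_den_eq_num]
  | add w₁ w₂ h₁ h₂ =>
    obtain ⟨N₁, hN₁, x₁, e₁⟩ := h₁
    obtain ⟨N₂, hN₂, x₂, e₂⟩ := h₂
    refine ⟨N₁ * N₂, Nat.mul_pos hN₁ hN₂, N₂ • x₁ + N₁ • x₂, ?_⟩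
    rw [tmul_add, one_tmul_nsmul, one_tmul_nsmul, ← e₁, ← e₂, smul_add, smul_smul, smul_smul]
    push_cast
    ring_nf

lemma isAlgebraicallyOpen_coneGen_image_one_tmul {A : Set M}
    (hopen : ∀ a ∈ A, ∀ x : M, ∃ n : ℕ, 0 < n ∧ n • a + x ∈ A) :
    IsAlgebraicallyOpen ℚ (coneGen ℚ ((fun x : M => ((1 : ℚ) ⊗ₜ[ℤ] x : ℚ ⊗[ℤ] M)) '' A)) := by
  intro v hv w
  obtain ⟨_, ⟨a, ha, rfl⟩, c, hc, hvc⟩ := exists_sub_smul_mem_coneGen hv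
  obtain ⟨N, hN, x, hx⟩ := exists_natCast_smul_eq_one_tmul w
  obtain ⟨m, hm, hmA⟩ := hopen a ha x
  have hmQ : (0 : ℚ) < m := Nat.cast_pos.2 hm
  refine ⟨c * N / m, by positivity, ?_⟩
  have hsplit : v + (c * N / m) • w
      = (v - c • (1 : ℚ) ⊗ₜ[ℤ] a) + (c / m) • (1 : ℚ) ⊗ₜ[ℤ] (m • a + x) := by
    rw [tmul_add, one_tmul_nsmul, ← hx]
    match_scalars <;> field_simp; ring
  rw [hsplit]
  exact add_mem_coneGen hvc (smul_mem_coneGen_of_mem (Set.mem_image_of_mem _ hmA) (by positivity))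

end RationalTensor

theorem coneGen_strongOpen_of_open_subsemigroup_general (M : Type*) [AddCommGroup M]
    (A : Set M)
    (hopen : ∀ a ∈ A, ∀ x : M, ∃ n : ℕ, 0 < n ∧ n • a + x ∈ A) :
    StrongOpen ℚ (coneGen ℚ ((fun x : M => ((1 : ℚ) ⊗ₜ[ℤ] x : ℚ ⊗[ℤ] M)) '' A)) :=
  convex_coneGen.strongOpen_of_isAlgebraicallyOpen (isAlgebraicallyOpen_coneGen_image_one_tmul hopen)

theorem coneGen_strongOpen_of_open_subsemigroup (M : Type*) [AddCommGroup M]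
    (A : Set M) (hA : ∀ x ∈ A, ∀ y ∈ A, x + y ∈ A)
    (hopen : ∀ a ∈ A, ∀ x : M, ∃ n : ℕ, 0 < n ∧ n • a + x ∈ A) :
    StrongOpen ℚ (coneGen ℚ ((fun x : M => ((1 : ℚ) ⊗ₜ[ℤ] x : ℚ ⊗[ℤ] M)) '' A)) :=
  coneGen_strongOpen_of_open_subsemigroup_general M A hopen
end

section
/- Let M be a finitely generated free ℤ-module and K a subset of M. Then the intersection of the ℤ-span of K with the union over m ≥ 1 of (1/m)·(m∗K) equals the intersection of the ℤ-span of K with the real convex hull of K in M ⊗ ℝ. Here m∗K = { x₁ + ⋯ + x_m : x_i ∈ K }. -/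
/-!
For `⊆`, `x` is the centroid of the `m` points of `K` summing to `m • x`. For `⊇`, Carathéodory
writes `1 ⊗ x` as a convex combination of affinely independent points `1 ⊗ yᵢ` with `yᵢ ∈ K`. In
coordinates the weights `w` are then the unique real solution of an integral linear system
`A w = c`, so `det (Aᵀ A) • w = adj (Aᵀ A) Aᵀ c` is integral, and `det (Aᵀ A) > 0` is the common
denominator that turns the convex combination into `N • x = ∑ nᵢ • yᵢ` with `nᵢ ∈ ℕ`, `∑ nᵢ = N`.
-/

open TensorProduct

/-- The `m`-fold sum `m ∗ K = { x₁ + ⋯ + x_m : xᵢ ∈ K }`. -/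
def foldSum {M : Type*} [AddCommMonoid M] (m : ℕ) (K : Set M) : Set M :=
  { x | ∃ f : Fin m → M, (∀ i, f i ∈ K) ∧ x = ∑ i, f i }

section foldSum

variable {M : Type*} [AddCommMonoid M] {K : Set M}

theorem zero_mem_foldSum_zero : (0 : M) ∈ foldSum 0 K :=
  ⟨Fin.elim0, fun i => i.elim0, by simp⟩

theorem add_mem_foldSum {p q : ℕ} {a b : M} (ha : a ∈ foldSum p K) (hb : b ∈ foldSum q K) :
    a + b ∈ foldSum (p + q) K := by
  obtain ⟨f, hf, rfl⟩ := ha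
  obtain ⟨g, hg, rfl⟩ := hb
  refine ⟨Fin.append f g, Fin.addCases (by simpa using hf) (by simpa using hg), ?_⟩
  simp [Fin.sum_univ_add]

theorem nsmul_mem_foldSum {y : M} (hy : y ∈ K) (n : ℕ) : n • y ∈ foldSum n K :=
  ⟨fun _ => y, fun _ => hy, by simp⟩

theorem sum_nsmul_mem_foldSum {τ : Type*} (s : Finset τ) (n : τ → ℕ) {y : τ → M}
    (hy : ∀ i, y i ∈ K) : ∑ i ∈ s, n i • y i ∈ foldSum (∑ i ∈ s, n i) K := by
  induction s using Finset.cons_induction with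
  | empty => exact zero_mem_foldSum_zero
  | cons i s hi ih =>
    rw [Finset.sum_cons, Finset.sum_cons]
    exact add_mem_foldSum (nsmul_mem_foldSum (hy i) (n i)) ih

end foldSum

theorem map_mem_convexHull_of_nsmul_mem_foldSum {M E : Type*} [AddCommMonoid M] [AddCommGroup E]
    [Module ℝ E] (φ : M →+ E) {K : Set M} {m : ℕ} (hm : 0 < m) {x : M}
    (hx : m • x ∈ foldSum m K) : φ x ∈ convexHull ℝ (φ '' K) := by
  obtain ⟨f, hf, hfx⟩ := hx
  have hm' : (m : ℝ) ≠ 0 := Nat.cast_ne_zero.2 hm.ne'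
  have hφx : φ x = ∑ i, (m : ℝ)⁻¹ • φ (f i) := by
    rw [← Finset.smul_sum, ← map_sum, ← hfx, map_nsmul, ← Nat.cast_smul_eq_nsmul ℝ,
      inv_smul_smul₀ hm']
  rw [hφx]
  refine (convex_convexHull ℝ _).sum_mem (fun _ _ => by positivity) ?_
    fun i _ => subset_convexHull ℝ _ ⟨f i, hf i, rfl⟩
  simp [hm']

open Matrix in
theorem Matrix.exists_pos_smul_eq_intCast_of_mulVec_eq {m n : Type*} [Fintype m] [Fintype n]
    [DecidableEq n] {A : Matrix m n ℤ} (hA : Function.Injective (A.map (Int.castRingHom ℝ)).mulVec)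
    {c : m → ℤ} {w : n → ℝ} (hw : A.map (Int.castRingHom ℝ) *ᵥ w = Int.castRingHom ℝ ∘ c) :
    ∃ N : ℤ, 0 < N ∧ ∃ v : n → ℤ, Int.castRingHom ℝ ∘ v = (N : ℝ) • w := by
  set f := Int.castRingHom ℝ
  set G := Aᵀ * A
  have hG : G.map f = (A.map f)ᵀ * A.map f := by rw [Matrix.map_mul, transpose_map]
  have hdet : f G.det = (G.map f).det := f.map_det G
  refine ⟨G.det, ?_, G.adjugate *ᵥ (Aᵀ *ᵥ c), ?_⟩
  · have hpos : 0 < f G.det := by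
      rw [hdet, hG]
      exact (PosDef.conjTranspose_mul_self _ hA).det_pos
    exact Int.cast_pos.1 hpos
  · have hcast : f ∘ (G.adjugate *ᵥ (Aᵀ *ᵥ c)) = (G.map f).adjugate *ᵥ ((A.map f)ᵀ *ᵥ (f ∘ c)) := by
      ext i
      rw [Function.comp_apply, f.map_mulVec, ← RingHom.mapMatrix_apply, f.map_adjugate,
        Function.comp_def]
      simp only [f.map_mulVec, Function.comp_def, transpose_map]
      rfl
    rw [hcast, ← hw, mulVec_mulVec w, ← hG, mulVec_mulVec w, adjugate_mul, smul_mulVec,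
      one_mulVec, ← hdet]
    rfl

open Matrix in
theorem exists_nsmul_eq_sum_nsmul_of_affineIndependent_intCast {ι τ : Type*} [Fintype ι]
    [Fintype τ] {p : τ → ι → ℤ} {q : ι → ℤ} {w : τ → ℝ}
    (hp : AffineIndependent ℝ fun i => Int.castRingHom ℝ ∘ p i) (hw0 : ∀ i, 0 ≤ w i)
    (hw1 : ∑ i, w i = 1) (hwq : ∑ i, w i • (Int.castRingHom ℝ ∘ p i) = Int.castRingHom ℝ ∘ q) :
    ∃ n : τ → ℕ, 0 < ∑ i, n i ∧ (∑ i, n i) • q = ∑ i, n i • p i := by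
  classical
  set f := Int.castRingHom ℝ
  -- Homogeneous coordinates: an extra row of ones records the sum of the weights.
  set A : Matrix (Option ι) τ ℤ := of fun o i => o.elim 1 (p i)
  set c : Option ι → ℤ := fun o => o.elim 1 q
  have hA : ∀ g : τ → ℝ,
      A.map f *ᵥ g = fun o => o.elim (∑ i, g i) fun j => (∑ i, g i • (f ∘ p i)) j := by
    intro g; funext o; cases o <;> simp [A, mulVec, dotProduct, mul_comm]
  have hinj : Function.Injective (A.map f).mulVec := by
    intro g g' h
    simp only [hA] at h
    funext i
    exact hp.eq_of_sum_eq_sum (congrFun h none) (funext fun j => congrFun h (some j)) i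
      (Finset.mem_univ i)
  obtain ⟨N, hN, v, hvw⟩ := exists_pos_smul_eq_intCast_of_mulVec_eq hinj (c := c) (w := w) <| by
    rw [hA]; funext o
    cases o with
    | none => simpa [c] using hw1
    | some j => simpa [c, Finset.sum_apply] using congrFun hwq j
  have hv : ∀ i, (v i : ℝ) = N * w i := congrFun hvw
  have hv0 : ∀ i, 0 ≤ v i := fun i => by
    have := mul_nonneg (by positivity : (0 : ℝ) ≤ N) (hw0 i)
    rw [← hv] at this
    exact_mod_cast this
  set n : τ → ℕ := fun i => (v i).toNat
  have hn : ∀ i, (n i : ℝ) = N * w i := fun i => by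
    rw [← hv, ← Int.toNat_of_nonneg (hv0 i)]; rfl
  have hsum : ((∑ i, n i : ℕ) : ℝ) = N := by
    push_cast; simp [hn, ← Finset.mul_sum, hw1]
  refine ⟨n, by exact_mod_cast hsum ▸ Int.cast_pos.2 hN, funext fun j => ?_⟩
  apply Int.cast_injective (α := ℝ)
  have hq : ∑ i, w i * p i j = (q j : ℝ) := by simpa [Finset.sum_apply] using congrFun hwq j
  simp only [Finset.sum_apply, Pi.smul_apply, nsmul_eq_mul, Int.cast_mul, Int.cast_sum,
    Int.cast_natCast]
  rw [hsum, ← hq, Finset.mul_sum]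
  simp [hn, mul_assoc]

theorem Module.Basis.baseChange_equivFun_one_tmul {ι R S M : Type*} [Fintype ι] [CommSemiring R]
    [Semiring S] [Algebra R S] [AddCommMonoid M] [Module R M] (b : Basis ι R M) (y : M) :
    (b.baseChange S).equivFun (1 ⊗ₜ y) = algebraMap R S ∘ b.equivFun y := by
  funext i
  simp [Algebra.algebraMap_eq_smul_one]

theorem exists_nsmul_eq_sum_nsmul_of_affineIndependent {M τ : Type*} [AddCommGroup M]
    [Module.Free ℤ M] [Module.Finite ℤ M] [Fintype τ] {y : τ → M} {x : M} {w : τ → ℝ}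
    (hy : AffineIndependent ℝ fun i => (1 : ℝ) ⊗ₜ[ℤ] y i) (hw0 : ∀ i, 0 ≤ w i)
    (hw1 : ∑ i, w i = 1) (hwx : ∑ i, w i • (1 : ℝ) ⊗ₜ[ℤ] y i = (1 : ℝ) ⊗ₜ[ℤ] x) :
    ∃ n : τ → ℕ, 0 < ∑ i, n i ∧ (∑ i, n i) • x = ∑ i, n i • y i := by
  let b := Module.Free.chooseBasis ℤ M
  let e := (b.baseChange ℝ).equivFun
  have he (y : M) : e (1 ⊗ₜ y) = Int.castRingHom ℝ ∘ b.equivFun y := by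
    rw [← algebraMap_int_eq]; exact b.baseChange_equivFun_one_tmul y
  obtain ⟨n, hn, hnx⟩ := exists_nsmul_eq_sum_nsmul_of_affineIndependent_intCast
    (p := fun i => b.equivFun (y i)) (q := b.equivFun x)
    (by rw [show _ = e ∘ fun i => (1 : ℝ) ⊗ₜ[ℤ] y i from funext fun i => (he (y i)).symm]
        exact hy.map' e.toLinearMap.toAffineMap e.injective)
    hw0 hw1
    (by simpa [he] using congrArg e hwx)
  exact ⟨n, hn, b.equivFun.injective (by simpa using hnx)⟩

theorem exists_nsmul_mem_foldSum_of_one_tmul_mem_convexHull {M : Type*} [AddCommGroup M]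
    [Module.Free ℤ M] [Module.Finite ℤ M] {K : Set M} {x : M}
    (hx : (1 : ℝ) ⊗ₜ[ℤ] x ∈ convexHull ℝ ((fun y : M => (1 : ℝ) ⊗ₜ[ℤ] y) '' K)) :
    ∃ m : ℕ, 0 < m ∧ m • x ∈ foldSum m K := by
  obtain ⟨τ, _, z, w, hzK, hz, hw0, hw1, hwx⟩ := eq_pos_convex_span_of_mem_convexHull hx
  choose y hyK hyz using fun i => hzK (Set.mem_range_self i)
  obtain rfl : z = fun i => (1 : ℝ) ⊗ₜ[ℤ] y i := funext fun i => (hyz i).symm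
  obtain ⟨n, hn, hnx⟩ := exists_nsmul_eq_sum_nsmul_of_affineIndependent hz (fun i => (hw0 i).le)
    hw1 hwx
  exact ⟨_, hn, hnx ▸ sum_nsmul_mem_foldSum Finset.univ n hyK⟩

theorem span_inter_foldSum_eq_span_inter_convexHull (M : Type*) [AddCommGroup M]
    [Module.Free ℤ M] [Module.Finite ℤ M] (K : Set M) :
    { x : M | x ∈ Submodule.span ℤ K ∧ ∃ m : ℕ, 0 < m ∧ m • x ∈ foldSum m K }
      = { x : M | x ∈ Submodule.span ℤ K ∧
          ((1 : ℝ) ⊗ₜ[ℤ] x : ℝ ⊗[ℤ] M) ∈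
            convexHull ℝ ((fun y : M => ((1 : ℝ) ⊗ₜ[ℤ] y : ℝ ⊗[ℤ] M)) '' K) } := by
  ext x
  refine and_congr_right fun _ => ⟨fun ⟨m, hm, hmx⟩ => ?_, fun hx => ?_⟩
  · exact map_mem_convexHull_of_nsmul_mem_foldSum (TensorProduct.mk ℤ ℝ M 1).toAddMonoidHom hm hmx
  · exact exists_nsmul_mem_foldSum_of_one_tmul_mem_convexHull hx
end

section
/- Let M be a finitely generated free ℤ-module and Δ a bounded symmetric convex set in M ⊗ ℝ. Then for any real number a ≥ 1, 0 ≤ log #(M ∩ aΔ) − log #(M ∩ Δ) ≤ log(⌈2a⌉) · rk M. -/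
open Pointwise

lemma lattice_finite_aux (n : ℕ) (Δ : Set (Fin n → ℝ)) (hb : Bornology.IsBounded Δ) :
    {x : Fin n → ℝ | (∀ i, ∃ k : ℤ, x i = (k : ℝ)) ∧ x ∈ Δ}.Finite := by
  obtain ⟨C, hC⟩ := isBounded_iff_forall_norm_le.mp hb
  have hfin : ({v : Fin n → ℤ | ∀ i, |v i| ≤ ⌈C⌉}).Finite := by
    have hsub : {v : Fin n → ℤ | ∀ i, |v i| ≤ ⌈C⌉} ⊆
        Set.pi Set.univ (fun _ : Fin n => Set.Icc (-⌈C⌉) ⌈C⌉) := by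
      intro v hv i _
      exact abs_le.mp (hv i)
    exact (Set.Finite.pi (fun _ => Set.finite_Icc _ _)).subset hsub
  apply (hfin.image (fun v : Fin n → ℤ => fun i => (v i : ℝ))).subset
  rintro x ⟨hx1, hx2⟩
  choose k hk using hx1
  refine ⟨k, fun i => ?_, by funext i; exact (hk i).symm⟩
  have h1 : |x i| ≤ C := le_trans (by simpa using norm_le_pi_norm x i) (hC x hx2)
  have h3 : |(k i : ℝ)| ≤ C := hk i ▸ h1
  have h2 : |(k i : ℝ)| ≤ ((⌈C⌉ : ℤ) : ℝ) := le_trans h3 (Int.le_ceil C)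
  exact_mod_cast h2

theorem log_card_lattice_points_dilation (n : ℕ) (Δ : Set (Fin n → ℝ))
    (hb : Bornology.IsBounded Δ) (hsym : ∀ x ∈ Δ, -x ∈ Δ) (hconv : Convex ℝ Δ)
    (a : ℝ) (ha : 1 ≤ a) :
    0 ≤ Real.log (Set.ncard {x : Fin n → ℝ | (∀ i, ∃ k : ℤ, x i = (k : ℝ)) ∧ x ∈ a • Δ}) -
        Real.log (Set.ncard {x : Fin n → ℝ | (∀ i, ∃ k : ℤ, x i = (k : ℝ)) ∧ x ∈ Δ}) ∧
    Real.log (Set.ncard {x : Fin n → ℝ | (∀ i, ∃ k : ℤ, x i = (k : ℝ)) ∧ x ∈ a • Δ}) -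
        Real.log (Set.ncard {x : Fin n → ℝ | (∀ i, ∃ k : ℤ, x i = (k : ℝ)) ∧ x ∈ Δ}) ≤
      Real.log ((⌈2 * a⌉ : ℤ) : ℝ) * n := by
  have ha0 : (0:ℝ) < a := lt_of_lt_of_le one_pos ha
  have hceil2 : (2:ℤ) ≤ ⌈2 * a⌉ := by
    have h2r : (2:ℝ) ≤ ((⌈2*a⌉ : ℤ) : ℝ) := le_trans (by linarith) (Int.le_ceil (2*a))
    exact_mod_cast h2r
  have hlogN : 0 ≤ Real.log ((⌈2 * a⌉ : ℤ) : ℝ) := Real.log_nonneg (by exact_mod_cast hceil2.trans' (by norm_num))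
  -- empty case
  rcases Set.eq_empty_or_nonempty Δ with hΔe | hΔne
  · subst hΔe
    simp only [Set.smul_set_empty, Set.mem_empty_iff_false, and_false,
      Set.setOf_false, Set.ncard_empty, Nat.cast_zero, Real.log_zero, sub_zero, sub_self]
    exact ⟨le_refl 0, mul_nonneg hlogN (Nat.cast_nonneg n)⟩
  -- 0 ∈ Δ
  obtain ⟨d0, hd0⟩ := hΔne
  have h0 : (0 : Fin n → ℝ) ∈ Δ := by
    have := hconv hd0 (hsym d0 hd0) (by norm_num : (0:ℝ) ≤ 1/2) (by norm_num : (0:ℝ) ≤ 1/2) (by norm_num)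
    simpa using this
  -- scaling lemma
  have hscale : ∀ t : ℝ, 0 ≤ t → t ≤ 1 → ∀ z ∈ Δ, t • z ∈ Δ := by
    intro t ht0 ht1 z hz
    have := hconv hz h0 ht0 (by linarith : (0:ℝ) ≤ 1 - t) (by ring)
    simpa using this
  set S := {x : Fin n → ℝ | (∀ i, ∃ k : ℤ, x i = (k : ℝ)) ∧ x ∈ Δ} with hS
  set T := {x : Fin n → ℝ | (∀ i, ∃ k : ℤ, x i = (k : ℝ)) ∧ x ∈ a • Δ} with hT
  have hSfin : S.Finite := lattice_finite_aux n Δ hb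
  have hTfin : T.Finite := lattice_finite_aux n (a • Δ) (hb.smul₀ a)
  have h0S : (0 : Fin n → ℝ) ∈ S := ⟨fun i => ⟨0, by simp⟩, h0⟩
  have hST : S ⊆ T := by
    rintro x ⟨hx1, hx2⟩
    refine ⟨hx1, ⟨a⁻¹ • x, ?_, ?_⟩⟩
    · exact hscale a⁻¹ (by positivity) (inv_le_one_of_one_le₀ ha) x hx2
    · show a • a⁻¹ • x = x
      rw [smul_smul, mul_inv_cancel₀ (ne_of_gt ha0), one_smul]
  set N : ℕ := (⌈2 * a⌉).toNat with hN
  have hN2 : 2 ≤ N := by rw [hN]; omega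
  haveI : NeZero N := ⟨by omega⟩
  have hNR : ((N:ℝ)) = ((⌈2*a⌉ : ℤ) : ℝ) := by
    rw [hN]; exact_mod_cast Int.toNat_of_nonneg (by omega)
  have hNpos : (0:ℝ) < (N:ℝ) := by
    have : (0:ℕ) < N := by omega
    exact_mod_cast this
  have h2aN : 2 * a ≤ (N:ℝ) := hNR ▸ Int.le_ceil (2*a)
  classical
  set r : (Fin n → ℝ) → (Fin n → ZMod N) := fun x i => ((⌊x i⌋ : ℤ) : ZMod N) with hr
  set rep : (Fin n → ZMod N) → (Fin n → ℝ) := fun c =>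
    if h : ∃ x, x ∈ T ∧ r x = c then h.choose else 0 with hrep
  have hrep_mem : ∀ x ∈ T, rep (r x) ∈ T ∧ r (rep (r x)) = r x := by
    intro x hx
    have h : ∃ y, y ∈ T ∧ r y = r x := ⟨x, hx, rfl⟩
    simp only [hrep, dif_pos h]
    exact h.choose_spec
  set Φ : (Fin n → ℝ) → (Fin n → ZMod N) × (Fin n → ℝ) :=
    fun x => (r x, (N:ℝ)⁻¹ • (x - rep (r x))) with hΦ
  have hmaps : ∀ x ∈ T, Φ x ∈ (Set.univ : Set (Fin n → ZMod N)) ×ˢ S := by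
    intro x hx
    obtain ⟨hyT, hyr⟩ := hrep_mem x hx
    show (r x, (N:ℝ)⁻¹ • (x - rep (r x))) ∈ (Set.univ : Set (Fin n → ZMod N)) ×ˢ S
    refine ⟨Set.mem_univ _, ?_, ?_⟩
    · intro i
      obtain ⟨k, hk⟩ := hx.1 i
      obtain ⟨m, hm⟩ := hyT.1 i
      have hcong : ((m : ZMod N)) = ((k : ZMod N)) := by
        have hco := congrFun hyr i
        simp only [hr] at hco
        rw [hk, hm, Int.floor_intCast, Int.floor_intCast] at hco
        exact hco
      have hdvd : (N:ℤ) ∣ k - m := Int.ModEq.dvd ((ZMod.intCast_eq_intCast_iff m k N).mp hcong)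
      obtain ⟨j, hj⟩ := hdvd
      refine ⟨j, ?_⟩
      have hdiff : x i - rep (r x) i = (N:ℝ) * (j:ℝ) := by
        rw [hk, hm]
        have : (k:ℝ) - (m:ℝ) = (((N:ℤ) * j : ℤ) : ℝ) := by rw [← hj]; push_cast; ring
        rw [this]; push_cast; ring
      show (N:ℝ)⁻¹ * (x i - rep (r x) i) = (j:ℝ)
      rw [hdiff]; field_simp
    · obtain ⟨d, hd, hxd⟩ := hx.2
      obtain ⟨d', hd', hyd⟩ := hyT.2
      have hw : ((1/2:ℝ)) • d + ((1/2:ℝ)) • (-d') ∈ Δ :=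
        hconv hd (hsym d' hd') (by norm_num) (by norm_num) (by norm_num)
      have heq : (N:ℝ)⁻¹ • (x - rep (r x)) =
          (2*a/(N:ℝ)) • ((1/2:ℝ) • d + (1/2:ℝ) • (-d')) := by
        have hxd' : x = a • d := hxd.symm
        have hyd' : rep (r x) = a • d' := hyd.symm
        rw [hyd', hxd']
        match_scalars <;> field_simp <;> ring
      rw [heq]
      exact hscale (2*a/(N:ℝ)) (by positivity) (by rw [div_le_one hNpos]; exact h2aN) _ hw
  have hinj : Set.InjOn Φ T := by
    intro x hx y hy hxy
    have h1 : r x = r y := congrArg Prod.fst hxy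
    have h2 := congrArg Prod.snd hxy
    simp only [hΦ] at h2
    rw [h1] at h2
    have h3 := smul_right_injective (Fin n → ℝ) (inv_ne_zero (ne_of_gt hNpos)) h2
    exact sub_left_injective h3
  have hcard : T.ncard ≤ N ^ n * S.ncard := by
    have hprodfin : ((Set.univ : Set (Fin n → ZMod N)) ×ˢ S).Finite :=
      Set.finite_univ.prod hSfin
    have h1 : T.ncard ≤ ((Set.univ : Set (Fin n → ZMod N)) ×ˢ S).ncard :=
      Set.ncard_le_ncard_of_injOn Φ hmaps hinj hprodfin
    have h2 : ((Set.univ : Set (Fin n → ZMod N)) ×ˢ S).ncard = N ^ n * S.ncard := by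
      have e1 : Nat.card ↥((Set.univ : Set (Fin n → ZMod N)) ×ˢ S) =
          Nat.card (↥(Set.univ : Set (Fin n → ZMod N)) × ↥S) :=
        Nat.card_congr (Equiv.Set.prod _ _)
      have e2 : Nat.card ↥(Set.univ : Set (Fin n → ZMod N)) = N ^ n := by
        rw [Nat.card_congr (Equiv.Set.univ _), Nat.card_eq_fintype_card,
          Fintype.card_fun, ZMod.card, Fintype.card_fin]
      rw [← Nat.card_coe_set_eq, e1, Nat.card_prod, e2, Nat.card_coe_set_eq]
    omega
  have hs1 : 1 ≤ S.ncard := by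
    have : 0 < S.ncard := (Set.ncard_pos hSfin).mpr ⟨0, h0S⟩
    omega
  have hst : S.ncard ≤ T.ncard := Set.ncard_le_ncard hST hTfin
  have hspos : (0:ℝ) < (S.ncard : ℝ) := by exact_mod_cast hs1
  have htpos : (0:ℝ) < (T.ncard : ℝ) := by exact_mod_cast lt_of_lt_of_le hs1 hst
  constructor
  · have := Real.log_le_log hspos (Nat.cast_le.mpr hst)
    linarith
  · have hlog : Real.log (T.ncard : ℝ) ≤ Real.log ((N:ℝ)^n * (S.ncard:ℝ)) := by
      apply Real.log_le_log htpos
      calc (T.ncard : ℝ) ≤ ((N ^ n * S.ncard : ℕ) : ℝ) := by exact_mod_cast hcard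
        _ = (N:ℝ)^n * (S.ncard:ℝ) := by push_cast; ring
    rw [Real.log_mul (by positivity) (ne_of_gt hspos), Real.log_pow] at hlog
    rw [← hNR]
    linarith
end

section
/- Let P be a finite-dimensional ℚ-vector space, V = P ⊗ ℝ, C a nonempty open convex subset of V, and f : C ∩ P → ℝ a function concave over ℚ. Then for every x ∈ C there exist positive reals ε and L such that the ε-ball U(x, ε) (with respect to a chosen inner product on V) is contained in C and |f(y) − f(z)| ≤ L·‖y − z‖ for all y, z ∈ U(x, ε) ∩ P. Consequently there is a unique concave continuous function f̃ : C → ℝ extending f. -/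
/-!
Through the coordinates, the rational points of a rational box inside `C` form the `ℚ`-convex hull
of its finitely many vertices, so `f` is bounded below there by its minimum over the vertices, and
bounded above by reflecting through the centre of the box. Given two rational points `y, z`,
extending the rational line from `z` through `y` by a rational step of length comparable to the
radius and applying concavity turns this bound into a Lipschitz estimate on a smaller ball.
Locally Lipschitz on `C ∩ P`, `f` has a limit along `C ∩ P` at every point of `C`; these limits
give the continuous extension, whose concavity passes from rational to real weights by density,
and which is unique as a continuous extension from a dense set.
-/

open Set Metric Filter Topology

lemma concaveOn_rat_of_forall {E : Type*} [AddCommGroup E] [Module ℝ E] [Module ℚ E]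
    [IsScalarTower ℚ ℝ E] {s : Set E} {f : E → ℝ} (hs : Convex ℚ s)
    (hf : ∀ x ∈ s, ∀ y ∈ s, ∀ t : ℚ, 0 ≤ t → t ≤ 1 →
      f ((t : ℝ) • x + ((1 : ℝ) - (t : ℝ)) • y) ≥ (t : ℝ) * f x + (1 - (t : ℝ)) * f y) :
    ConcaveOn ℚ s f := by
  refine ⟨hs, fun x hx y hy a b ha hb hab => ?_⟩
  obtain rfl : b = 1 - a := by linarith
  simpa [Rat.smul_def, ← Rat.cast_smul_eq_qsmul ℝ] using hf x hx y hy a ha (by linarith)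

section Box

variable {𝕜 ι β : Type*} [Field 𝕜] [LinearOrder 𝕜] [IsStrictOrderedRing 𝕜] [Fintype ι]

lemma convexHull_pi_pair_eq_Icc {a b : ι → 𝕜} (hab : a ≤ b) :
    convexHull 𝕜 (univ.pi fun i => ({a i, b i} : Set 𝕜)) = Icc a b := by
  simp_rw [convexHull_pi, convexHull_pair, segment_eq_Icc (hab _), pi_univ_Icc]

variable [AddCommGroup β] [LinearOrder β] [IsOrderedAddMonoid β] [Module 𝕜 β]
  [IsStrictOrderedModule 𝕜 β] {s : Set (ι → 𝕜)} {g : (ι → 𝕜) → β} {a b : ι → 𝕜}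

lemma ConcaveOn.bddBelow_image_Icc (hg : ConcaveOn 𝕜 s g) (hab : a ≤ b) (hs : Icc a b ⊆ s) :
    BddBelow (g '' Icc a b) := by
  rw [← convexHull_pi_pair_eq_Icc hab] at hs ⊢
  have hfin : (univ.pi fun i => ({a i, b i} : Set 𝕜)).Finite := Finite.pi fun _ => toFinite _
  exact hg.bddBelow_convexHull ((subset_convexHull _ _).trans hs) (hfin.image g).bddBelow

lemma ConcaveOn.bddAbove_image_Icc (hg : ConcaveOn 𝕜 s g) (hab : a ≤ b) (hs : Icc a b ⊆ s) :
    BddAbove (g '' Icc a b) := by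
  obtain ⟨m, hm⟩ := hg.bddBelow_image_Icc hab hs
  set c : ι → 𝕜 := (2 : 𝕜)⁻¹ • (a + b)
  refine ⟨(2 : 𝕜) • g c - m, forall_mem_image.2 fun q hq => ?_⟩
  -- `q` and its mirror image `a + b - q` in the box have midpoint `c`
  have hq' : a + b - q ∈ Icc a b :=
    ⟨fun i => by simp only [Pi.add_apply, Pi.sub_apply]; linarith [hq.2 i],
      fun i => by simp only [Pi.add_apply, Pi.sub_apply]; linarith [hq.1 i]⟩
  have hmid := hg.2 (hs hq) (hs hq') (by positivity : (0 : 𝕜) ≤ 2⁻¹)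
    (by positivity : (0 : 𝕜) ≤ 2⁻¹) (by norm_num)
  rw [← smul_add, ← smul_add, add_sub_cancel] at hmid
  have hsum : g q + g (a + b - q) ≤ (2 : 𝕜) • g c := by
    have := smul_le_smul_of_nonneg_left hmid (show (0 : 𝕜) ≤ 2 by norm_num)
    rwa [smul_smul, mul_inv_cancel₀ two_ne_zero, one_smul] at this
  have := hm (mem_image_of_mem g hq')
  rw [le_sub_iff_add_le]
  exact (add_le_add_right this _).trans hsum

end Box

section Lipschitz

lemma ConcaveOn.mul_sub_le_sub_add_smul {E : Type*} [AddCommGroup E] [Module ℚ E] {s : Set E}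
    {f : E → ℝ} (hf : ConcaveOn ℚ s f) {y z : E} {t : ℚ} (ht : 0 < t) (hz : z ∈ s)
    (hw : y + t • (y - z) ∈ s) : (t : ℝ) * (f z - f y) ≤ f y - f (y + t • (y - z)) := by
  have hy : (t / (1 + t)) • z + (1 / (1 + t)) • (y + t • (y - z)) = y := by
    have : 1 + t ≠ 0 := by positivity
    match_scalars <;> field_simp; ring
  have hconc := hf.2 hz hw (by positivity : 0 ≤ t / (1 + t)) (by positivity : 0 ≤ 1 / (1 + t))
    (by field_simp; ring)
  rw [hy, Rat.smul_def, Rat.smul_def] at hconc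
  push_cast at hconc
  rw [div_mul_eq_mul_div, div_mul_eq_mul_div, ← add_div, div_le_iff₀ (by positivity)] at hconc
  linarith

variable {E : Type*} [NormedAddCommGroup E] [NormedSpace ℝ E] [Module ℚ E] [IsScalarTower ℚ ℝ E]

lemma ConcaveOn.lipschitzOnWith_inter_of_abs_le {P : Submodule ℚ E} {s : Set E} {f : E → ℝ}
    {x₀ : E} {r ε M : ℝ} (hf : ConcaveOn ℚ s f) (hs : ball x₀ r ∩ P ⊆ s) (hε : 0 < ε)
    (hM : ∀ a ∈ ball x₀ r ∩ P, |f a| ≤ M) :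
    LipschitzOnWith (4 * M / ε).toNNReal f (ball x₀ (r - ε) ∩ P) := by
  have hsub : ball x₀ (r - ε) ∩ P ⊆ ball x₀ r ∩ P :=
    inter_subset_inter_left _ (ball_subset_ball (by linarith))
  have oneside {y z : E} (hy : y ∈ ball x₀ (r - ε) ∩ P) (hz : z ∈ ball x₀ (r - ε) ∩ P) :
      f z - f y ≤ 4 * M / ε * dist y z := by
    obtain rfl | hyz := eq_or_ne y z
    · simp
    have hd : 0 < dist y z := dist_pos.2 hyz
    -- `w` lies on the line from `z` through `y`, beyond `y` at a distance between `ε / 2` and `ε`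
    obtain ⟨t, ht₁, ht₂⟩ :=
      exists_rat_btwn (div_lt_div_of_pos_left hε hd (by linarith : dist y z < 2 * dist y z))
    have ht : (0 : ℝ) < t := (by positivity : 0 < ε / (2 * dist y z)).trans ht₁
    set w := y + t • (y - z)
    have hwP : w ∈ P := P.add_mem hy.2 (P.smul_mem t (P.sub_mem hy.2 hz.2))
    have hw : w ∈ ball x₀ r := by
      rw [mem_ball, dist_eq_norm]
      calc ‖w - x₀‖ = ‖(y - x₀) + (t : ℝ) • (y - z)‖ := by
            rw [Rat.cast_smul_eq_qsmul, sub_add_eq_add_sub]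
        _ ≤ ‖y - x₀‖ + ‖(t : ℝ) • (y - z)‖ := norm_add_le _ _
        _ = ‖y - x₀‖ + t * dist y z := by rw [norm_smul, Real.norm_of_nonneg ht.le, dist_eq_norm]
        _ < r := by linarith [mem_ball_iff_norm.1 hy.1, (lt_div_iff₀ hd).1 ht₂]
    have hslope := hf.mul_sub_le_sub_add_smul (Rat.cast_pos.1 ht) (hs (hsub hz)) (hs ⟨hw, hwP⟩)
    have hMy := abs_le.1 (hM y (hsub hy))
    have hMw := abs_le.1 (hM w ⟨hw, hwP⟩)
    have hε' : ε < 2 * dist y z * t := by rwa [div_lt_iff₀ (by positivity), mul_comm] at ht₁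
    rw [div_mul_eq_mul_div, le_div_iff₀ hε]
    rcases le_or_gt (f z - f y) 0 with hneg | hpos
    · nlinarith [(abs_nonneg _).trans (hM y (hsub hy))]
    · nlinarith
  refine .of_dist_le' fun y hy z hz => ?_
  rw [Real.dist_eq, abs_sub_le_iff]
  exact ⟨dist_comm y z ▸ oneside hz hy, oneside hy hz⟩

end Lipschitz

section RatVec

variable {ι : Type*}

def ratVec (ι : Type*) : (ι → ℚ) →ₗ[ℚ] EuclideanSpace ℝ ι where
  toFun q := WithLp.toLp 2 fun i => (q i : ℝ)
  map_add' _ _ := by ext; simp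
  map_smul' _ _ := by ext; simp [Rat.smul_def]

lemma coe_range_ratVec : (LinearMap.range (ratVec ι) : Set (EuclideanSpace ℝ ι)) =
    {x | ∀ i, ∃ q : ℚ, x i = (q : ℝ)} := by
  ext x
  refine ⟨?_, fun h => ?_⟩
  · rintro ⟨q, rfl⟩ i
    exact ⟨q i, rfl⟩
  · choose q hq using h
    exact ⟨q, by ext i; exact (hq i).symm⟩

lemma dense_coe_range_ratVec : Dense (LinearMap.range (ratVec ι) : Set (EuclideanSpace ℝ ι)) := by
  rw [LinearMap.coe_range]
  exact (WithLp.toLp_surjective 2).denseRange.comp (DenseRange.piMap fun _ => Rat.denseRange_cast)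
    (PiLp.continuous_toLp 2 _)

lemma exists_rat_Icc_subset_of_mem_nhds {U : Set (ι → ℝ)} {y : ι → ℝ} [Fintype ι] (hU : U ∈ 𝓝 y) :
    ∃ a b : ι → ℚ, (∀ i, (a i : ℝ) < y i) ∧ (∀ i, y i < b i) ∧
      Icc (fun i => (a i : ℝ)) (fun i => (b i : ℝ)) ⊆ U := by
  obtain ⟨δ, hδ, hball⟩ := Metric.mem_nhds_iff.1 hU
  choose a ha using fun i => exists_rat_btwn (show y i - δ / 2 < y i by linarith)
  choose b hb using fun i => exists_rat_btwn (show y i < y i + δ / 2 by linarith)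
  refine ⟨a, b, fun i => (ha i).2, fun i => (hb i).1, fun z hz => hball ?_⟩
  have hzy : dist z y ≤ δ / 2 := (dist_pi_le_iff (by positivity)).2 fun i => by
    rw [Real.dist_eq, abs_sub_le_iff]
    constructor <;> linarith [hz.1 i, hz.2 i, (ha i).1, (hb i).2]
  exact mem_ball.2 (by linarith)

lemma ConcaveOn.exists_eventually_abs_le_range_ratVec [Fintype ι] {C : Set (EuclideanSpace ℝ ι)}
    {f : EuclideanSpace ℝ ι → ℝ} {x : EuclideanSpace ℝ ι}
    (hf : ConcaveOn ℚ (C ∩ LinearMap.range (ratVec ι)) f) (hC : C ∈ 𝓝 x) :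
    ∃ M, ∀ᶠ y in 𝓝 x, y ∈ LinearMap.range (ratVec ι) → |f y| ≤ M := by
  obtain ⟨a, b, hax, hxb, habC⟩ :=
    exists_rat_Icc_subset_of_mem_nhds ((PiLp.continuous_toLp 2 _).continuousAt.preimage_mem_nhds hC)
  have hg : ConcaveOn ℚ (ratVec ι ⁻¹' C) (f ∘ ratVec ι) := by
    simpa [LinearMap.coe_range] using hf.comp_linearMap (ratVec ι)
  have hab : a ≤ b := fun i => by exact_mod_cast ((hax i).trans (hxb i)).le
  have hbox : Icc a b ⊆ ratVec ι ⁻¹' C := fun q hq =>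
    habC ⟨fun i => Rat.cast_le.2 (hq.1 i), fun i => Rat.cast_le.2 (hq.2 i)⟩
  obtain ⟨m, hm⟩ := hg.bddBelow_image_Icc hab hbox
  obtain ⟨M, hM⟩ := hg.bddAbove_image_Icc hab hbox
  refine ⟨max (-m) M, ?_⟩
  filter_upwards
    [(PiLp.continuous_ofLp 2 _).continuousAt.preimage_mem_nhds (pi_Icc_mem_nhds hax hxb)]
    with y hy hyP
  obtain ⟨q, rfl⟩ := hyP
  have hq : q ∈ Icc a b := ⟨fun i => Rat.cast_le.1 (hy.1 i), fun i => Rat.cast_le.1 (hy.2 i)⟩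
  have hlow : m ≤ f (ratVec ι q) := hm (mem_image_of_mem _ hq)
  have hup : f (ratVec ι q) ≤ M := hM (mem_image_of_mem _ hq)
  exact abs_le.2 ⟨by linarith [le_max_left (-m) M], hup.trans (le_max_right _ _)⟩

lemma exists_lipschitzOnWith_ball_inter_range_ratVec [Fintype ι] {C : Set (EuclideanSpace ℝ ι)}
    {f : EuclideanSpace ℝ ι → ℝ} (hC : IsOpen C)
    (hf : ConcaveOn ℚ (C ∩ LinearMap.range (ratVec ι)) f) {x : EuclideanSpace ℝ ι} (hx : x ∈ C) :
    ∃ ε > 0, ball x ε ⊆ C ∧ ∃ K, LipschitzOnWith K f (ball x ε ∩ LinearMap.range (ratVec ι)) := by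
  obtain ⟨M, hM⟩ := hf.exists_eventually_abs_le_range_ratVec (hC.mem_nhds hx)
  obtain ⟨r, hr, hrC⟩ := Metric.mem_nhds_iff.1 (inter_mem (hC.mem_nhds hx) hM)
  have hlip := hf.lipschitzOnWith_inter_of_abs_le (fun y hy => ⟨(hrC hy.1).1, hy.2⟩) (half_pos hr)
    fun y hy => (hrC hy.1).2 hy.2
  rw [sub_half] at hlip
  exact ⟨r / 2, by positivity, (ball_subset_ball (by linarith)).trans fun y hy => (hrC hy).1, _,
    hlip⟩

end RatVec

lemma LipschitzOnWith.exists_tendsto_nhdsWithin {α : Type*} [PseudoMetricSpace α] {f : α → ℝ}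
    {s t : Set α} {x : α} {K : NNReal} (hf : LipschitzOnWith K f t) (ht : t ∈ 𝓝[s] x) :
    ∃ c, Tendsto f (𝓝[s] x) (𝓝 c) := by
  obtain ⟨g, hg, hfg⟩ := hf.extend_real
  exact ⟨g x, ((hg.continuous.tendsto x).mono_left nhdsWithin_le_nhds).congr'
    (eventually_of_mem ht fun y hy => (hfg hy).symm)⟩

lemma Icc_subset_closure_inter_range_ratCast :
    Icc (0 : ℝ) 1 ⊆ closure (Icc 0 1 ∩ range ((↑) : ℚ → ℝ)) :=
  calc Icc (0 : ℝ) 1 = closure (Ioo 0 1) := (closure_Ioo zero_ne_one).symm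
    _ ⊆ closure (Ioo 0 1 ∩ range ((↑) : ℚ → ℝ)) :=
      closure_minimal (Rat.denseRange_cast.open_subset_closure_inter isOpen_Ioo) isClosed_closure
    _ ⊆ closure (Icc 0 1 ∩ range ((↑) : ℚ → ℝ)) :=
      closure_mono (inter_subset_inter_left _ Ioo_subset_Icc_self)

lemma concaveOn_of_concaveOn_rat_of_dense {E : Type*} [TopologicalSpace E] [AddCommGroup E]
    [Module ℝ E] [IsTopologicalAddGroup E] [ContinuousSMul ℝ E] [Module ℚ E] [IsScalarTower ℚ ℝ E]
    {C P : Set E} {g : E → ℝ} (hC : IsOpen C) (hCc : Convex ℝ C) (hP : Dense P)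
    (hgP : ConcaveOn ℚ (C ∩ P) g) (hg : ContinuousOn g C) : ConcaveOn ℝ C g := by
  refine ⟨hCc, fun x hx y hy a b ha hb hab => ?_⟩
  obtain rfl : b = 1 - a := by linarith
  set D : Set (E × E × ℝ) := C ×ˢ C ×ˢ Icc 0 1
  set T : Set (E × E × ℝ) := (C ∩ P) ×ˢ (C ∩ P) ×ˢ (Icc 0 1 ∩ range ((↑) : ℚ → ℝ))
  have hTD : T ⊆ D := prod_mono inter_subset_left (prod_mono inter_subset_left inter_subset_left)
  have hDT : D ⊆ closure T := by
    simp only [D, T, closure_prod_eq]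
    exact prod_mono (hP.open_subset_closure_inter hC)
      (prod_mono (hP.open_subset_closure_inter hC) Icc_subset_closure_inter_range_ratCast)
  have hcomb : MapsTo (fun p : E × E × ℝ => p.2.2 • p.1 + (1 - p.2.2) • p.2.1) D C :=
    fun p hp => hCc hp.1 hp.2.1 hp.2.2.1 (by linarith [hp.2.2.2]) (by ring)
  have hleft : ContinuousOn (fun p : E × E × ℝ => p.2.2 * g p.1 + (1 - p.2.2) * g p.2.1) D :=
    (continuous_snd.snd.continuousOn.mul (hg.comp continuous_fst.continuousOn
      fun p hp => hp.1)).add ((continuous_const.sub continuous_snd.snd).continuousOn.mul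
      (hg.comp continuous_snd.fst.continuousOn fun p hp => hp.2.1))
  have hright : ContinuousOn (fun p : E × E × ℝ => g (p.2.2 • p.1 + (1 - p.2.2) • p.2.1)) D :=
    hg.comp (by fun_prop) hcomb
  have hxy : (x, y, a) ∈ D := ⟨hx, hy, ha, by linarith⟩
  refine ContinuousWithinAt.closure_le (hDT hxy) ((hleft _ hxy).mono hTD)
    ((hright _ hxy).mono hTD) ?_
  rintro ⟨u, v, _⟩ ⟨hu, hv, ht, q, rfl⟩
  obtain ⟨hq, hq'⟩ : (0 : ℝ) ≤ q ∧ (q : ℝ) ≤ 1 := ht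
  replace hq : 0 ≤ q := by exact_mod_cast hq
  replace hq' : 0 ≤ 1 - q := sub_nonneg.2 (by exact_mod_cast hq')
  simpa [Rat.smul_def, ← Rat.cast_smul_eq_qsmul ℝ] using hgP.2 hu hv hq hq' (by ring)

theorem concave_rational_locally_lipschitz_and_extension_general (n : ℕ)
    (C : Set (EuclideanSpace ℝ (Fin n))) (hCo : IsOpen C) (hCc : Convex ℝ C)
    (P : Set (EuclideanSpace ℝ (Fin n)))
    (hP : P = { x : EuclideanSpace ℝ (Fin n) | ∀ i, ∃ q : ℚ, x i = (q : ℝ) })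
    (f : EuclideanSpace ℝ (Fin n) → ℝ)
    (hf : ∀ x ∈ C ∩ P, ∀ y ∈ C ∩ P, ∀ t : ℚ, 0 ≤ t → t ≤ 1 →
      f ((t : ℝ) • x + ((1 : ℝ) - (t : ℝ)) • y) ≥ (t : ℝ) * f x + (1 - (t : ℝ)) * f y) :
    (∀ x ∈ C, ∃ ε L : ℝ, 0 < ε ∧ 0 < L ∧ Metric.ball x ε ⊆ C ∧
      ∀ y ∈ Metric.ball x ε ∩ P, ∀ z ∈ Metric.ball x ε ∩ P,
        |f y - f z| ≤ L * dist y z) ∧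
    ∃ g : EuclideanSpace ℝ (Fin n) → ℝ,
      (ConcaveOn ℝ C g ∧ ContinuousOn g C ∧ ∀ x ∈ C ∩ P, g x = f x) ∧
      ∀ g' : EuclideanSpace ℝ (Fin n) → ℝ,
        (ConcaveOn ℝ C g' ∧ ContinuousOn g' C ∧ ∀ x ∈ C ∩ P, g' x = f x) →
        Set.EqOn g' g C := by
  obtain rfl : P = LinearMap.range (ratVec (Fin n)) := hP.trans coe_range_ratVec.symm
  have hfq := concaveOn_rat_of_forall ((hCc.lift ℚ).inter (Submodule.convex _)) hf
  have hlip := fun x (hx : x ∈ C) => exists_lipschitzOnWith_ball_inter_range_ratVec hCo hfq hx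
  have hdense : C ⊆ closure (C ∩ LinearMap.range (ratVec (Fin n))) :=
    dense_coe_range_ratVec.open_subset_closure_inter hCo
  have hnhds {x} {ε : ℝ} (hε : 0 < ε) : ball x ε ∩ LinearMap.range (ratVec (Fin n)) ∈
      𝓝[C ∩ LinearMap.range (ratVec (Fin n))] x :=
    mem_nhdsWithin_iff_exists_mem_nhds_inter.2
      ⟨ball x ε, ball_mem_nhds x hε, inter_subset_inter_right _ inter_subset_right⟩
  have hfc : ContinuousOn f (C ∩ LinearMap.range (ratVec (Fin n))) := by
    refine LocallyLipschitzOn.continuousOn fun x hx => ?_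
    obtain ⟨ε, hε, -, K, hK⟩ := hlip x hx.1
    exact ⟨K, _, hnhds hε, hK⟩
  set g := extendFrom (C ∩ LinearMap.range (ratVec (Fin n))) f
  have hgc : ContinuousOn g C := by
    refine continuousOn_extendFrom hdense fun x hx => ?_
    obtain ⟨ε, hε, -, K, hK⟩ := hlip x hx
    exact hK.exists_tendsto_nhdsWithin (hnhds hε)
  have hgf := extendFrom_extends hfc
  refine ⟨fun x hx => ?_, g, ⟨concaveOn_of_concaveOn_rat_of_dense hCo hCc dense_coe_range_ratVec
    (hfq.congr fun y hy => (hgf y hy).symm) hgc, hgc, hgf⟩,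
    fun g' ⟨_, hg'c, hg'f⟩ => .of_subset_closure (fun y hy => (hg'f y hy).trans (hgf y hy).symm)
      hg'c hgc inter_subset_left hdense⟩
  obtain ⟨ε, hε, hεC, K, hK⟩ := hlip x hx
  refine ⟨ε, K + 1, hε, by positivity, hεC, fun y hy z hz => ?_⟩
  rw [← Real.dist_eq]
  exact (hK.dist_le_mul y hy z hz).trans (by gcongr; linarith)

theorem concave_rational_locally_lipschitz_and_extension (n : ℕ)
    (C : Set (EuclideanSpace ℝ (Fin n))) (hCo : IsOpen C) (hCc : Convex ℝ C)
    (hCne : C.Nonempty) (P : Set (EuclideanSpace ℝ (Fin n)))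
    (hP : P = { x : EuclideanSpace ℝ (Fin n) | ∀ i, ∃ q : ℚ, x i = (q : ℝ) })
    (f : EuclideanSpace ℝ (Fin n) → ℝ)
    (hf : ∀ x ∈ C ∩ P, ∀ y ∈ C ∩ P, ∀ t : ℚ, 0 ≤ t → t ≤ 1 →
      f ((t : ℝ) • x + ((1 : ℝ) - (t : ℝ)) • y) ≥ (t : ℝ) * f x + (1 - (t : ℝ)) * f y) :
    (∀ x ∈ C, ∃ ε L : ℝ, 0 < ε ∧ 0 < L ∧ Metric.ball x ε ⊆ C ∧
      ∀ y ∈ Metric.ball x ε ∩ P, ∀ z ∈ Metric.ball x ε ∩ P,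
        |f y - f z| ≤ L * dist y z) ∧
    ∃ g : EuclideanSpace ℝ (Fin n) → ℝ,
      (ConcaveOn ℝ C g ∧ ContinuousOn g C ∧ ∀ x ∈ C ∩ P, g x = f x) ∧
      ∀ g' : EuclideanSpace ℝ (Fin n) → ℝ,
        (ConcaveOn ℝ C g' ∧ ContinuousOn g' C ∧ ∀ x ∈ C ∩ P, g' x = f x) →
        Set.EqOn g' g C :=
  concave_rational_locally_lipschitz_and_extension_general n C hCo hCc P hP f hf
end

section
/- Let f : V → V′ be a surjective linear map of vector spaces over K (K = ℚ or ℝ). Then f is an open map with respect to the strong topologies on V and V′. -/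
/-- The affine map `y ↦ ψ y + w` is the linear map `(y, t) ↦ ψ y + t • w` on `K^(n+1)`
restricted to the slice `t = 1`. -/
theorem StrongOpen.isOpen_preimage_add_const {K : Type*} [Field K] [LinearOrder K]
    [IsStrictOrderedRing K] [TopologicalSpace K] {V : Type*} [AddCommGroup V] [Module K V]
    {U : Set V} (hU : StrongOpen K U) {n : ℕ} (ψ : (Fin n → K) →ₗ[K] V) (w : V) :
    IsOpen {y | ψ y + w ∈ U} := by
  let L : (Fin (n + 1) → K) →ₗ[K] V :=
    ψ.comp (LinearMap.funLeft K K Fin.castSucc) + (LinearMap.proj (Fin.last n)).smulRight w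
  have hL : ∀ y : Fin n → K, L (Fin.snoc y 1) = ψ y + w := fun y => by
    simp [L, LinearMap.funLeft]
  have hslice : Continuous fun y : Fin n → K => (Fin.snoc y 1 : Fin (n + 1) → K) :=
    continuous_id.finSnoc (A := fun _ => K) continuous_const
  convert (hU (n + 1) L).preimage hslice using 1
  ext y
  simp only [Set.mem_preimage, hL, Set.mem_ofPred_eq]

theorem surjective_linear_strong_openMap_general (K : Type*) [Field K] [LinearOrder K] [IsStrictOrderedRing K]
    [TopologicalSpace K] {V V' : Type*} [AddCommGroup V] [Module K V]
    [AddCommGroup V'] [Module K V'] (f : V →ₗ[K] V') (hf : Function.Surjective f) :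
    ∀ U : Set V, StrongOpen K U → StrongOpen K (⇑f '' U) := by
  intro U hU n φ
  obtain ⟨ψ, hψ⟩ := Module.projective_lifting_property f φ hf
  have hfψ : ∀ y, f (ψ y) = φ y := LinearMap.ext_iff.mp hψ
  have hunion : φ ⁻¹' (f '' U) = ⋃ w ∈ LinearMap.ker f, {y | ψ y + w ∈ U} := by
    ext y
    simp only [Set.mem_preimage, Set.mem_image, Set.mem_iUnion, Set.mem_ofPred_eq,
      LinearMap.mem_ker, exists_prop]
    constructor
    · rintro ⟨u, hu, hfu⟩
      exact ⟨u - ψ y, by simp [hfu, hfψ], by simpa using hu⟩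
    · rintro ⟨w, hw, hU⟩
      exact ⟨ψ y + w, hU, by simp [hw, hfψ]⟩
  rw [hunion]
  exact isOpen_biUnion fun w _ => hU.isOpen_preimage_add_const ψ w

theorem surjective_linear_strong_openMap (K : Type*) [Field K] [LinearOrder K] [IsStrictOrderedRing K]
    [TopologicalSpace K] [OrderTopology K] {V V' : Type*} [AddCommGroup V] [Module K V]
    [AddCommGroup V'] [Module K V'] (f : V →ₗ[K] V') (hf : Function.Surjective f) :
    ∀ U : Set V, StrongOpen K U → StrongOpen K (⇑f '' U) :=
  surjective_linear_strong_openMap_general K f hf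
end

section
/- Let V be a vector space over K (K = ℚ or ℝ) and V′ a K-subspace. Then the subspace topology on V′ induced by the strong topology on V coincides with the strong topology of V′ itself. -/
theorem StrongOpen.preimage_linearMap {K : Type*} [Field K] [LinearOrder K]
    [IsStrictOrderedRing K] [TopologicalSpace K] {V W : Type*} [AddCommGroup V] [Module K V]
    [AddCommGroup W] [Module K W] {U : Set W} (hU : StrongOpen K U) (f : V →ₗ[K] W) :
    StrongOpen K (f ⁻¹' U) :=
  fun n φ => hU n (f.comp φ)

theorem strong_topology_subspace_general (K : Type*) [Field K] [LinearOrder K] [IsStrictOrderedRing K] [TopologicalSpace K]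
    {V : Type*} [AddCommGroup V] [Module K V] (V' : Submodule K V)
    (U' : Set V') :
    StrongOpen K U' ↔ ∃ U : Set V, StrongOpen K U ∧ U' = ((↑) : V' → V) ⁻¹' U := by
  constructor
  · intro hU'
    obtain ⟨q, hq⟩ := V'.exists_isCompl
    let π : V →ₗ[K] V' := V'.projectionOnto q hq
    refine ⟨π ⁻¹' U', hU'.preimage_linearMap π, ?_⟩
    ext x
    simp [π, Submodule.projectionOnto_apply_left hq x]
  · rintro ⟨U, hU, rfl⟩
    exact hU.preimage_linearMap V'.subtype

/-- The induced topology on a subspace `V'` from the strong topology of `V`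
coincides with the strong topology of `V'`: they have the same open sets. -/
theorem strong_topology_subspace (K : Type*) [Field K] [LinearOrder K] [IsStrictOrderedRing K] [TopologicalSpace K]
    [OrderTopology K] {V : Type*} [AddCommGroup V] [Module K V] (V' : Submodule K V)
    (U' : Set V') :
    StrongOpen K U' ↔ ∃ U : Set V, StrongOpen K U ∧ U' = ((↑) : V' → V) ⁻¹' U :=
  strong_topology_subspace_general K V' U'
end

section
/- Let M be a finitely generated free ℤ-module and (M, ‖·‖) a normed ℤ-module (‖·‖ a norm on M ⊗ ℝ). Define λ(M, ‖·‖) as the infimum of λ > 0 such that M admits a free ℤ-basis e₁,…,e_n with ‖e_i‖ ≤ λ for all i, and λ′(M, ‖·‖) as the infimum of λ′ > 0 such that there exist e₁,…,e_n ∈ M forming a ℚ-basis of M ⊗ ℚ with ‖e_i‖ ≤ λ′ for all i. Then λ′(M, ‖·‖) ≤ λ(M, ‖·‖) ≤ λ′(M, ‖·‖) · rk M. -/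
/-!
Given `e₁, …, eₙ ∈ ℤⁿ` forming a `ℚ`-basis, in coordinates with respect to `e` the lattice `ℤⁿ`
becomes a lattice `Λ` with `ℤⁿ ⊆ Λ ⊆ ℚⁿ`. Let `Vᵢ` be the span of the first `i` coordinate vectors.
The `i`-th coordinates of `Λ ∩ Vᵢ₊₁` form a finitely generated subgroup of `ℚ` containing `1`,
hence `qℤ` with `|q| ≤ 1`; a lift of `q`, with its coordinates below `i` reduced modulo `ℤ`,
generates `Λ ∩ Vᵢ₊₁` over `Λ ∩ Vᵢ` and has all coordinates in `[-1, 1]`. These lifts form a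
`ℤ`-basis of `ℤⁿ` whose members are combinations of the `eⱼ` with coefficients of absolute value at
most `1`, hence of norm at most `n · maxⱼ ‖eⱼ‖`. The other inequality holds because a `ℤ`-basis is
a `ℚ`-basis.
-/

open Submodule

lemma exists_eq_span_singleton_abs_le_one (T : Submodule ℤ ℚ) (hT : T.FG) (h1 : (1 : ℚ) ∈ T) :
    ∃ q : ℚ, T = span ℤ {q} ∧ |q| ≤ 1 := by
  let I : FractionalIdeal (nonZeroDivisors ℤ) ℚ := ⟨T, FractionalIdeal.isFractional_of_fg hT⟩
  obtain ⟨q, hq⟩ : T.IsPrincipal := (inferInstance : (I : Submodule ℤ ℚ).IsPrincipal)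
  refine ⟨q, hq, ?_⟩
  rw [hq, mem_span_singleton] at h1
  obtain ⟨m, hm⟩ := h1
  have hm0 : m ≠ 0 := by rintro rfl; simp at hm
  have hmq : |(m : ℚ)| * |q| = 1 := by rw [← abs_mul, ← zsmul_eq_mul, hm, abs_one]
  have hm1 : (1 : ℚ) ≤ |(m : ℚ)| := by exact_mod_cast Int.one_le_abs hm0
  nlinarith [abs_nonneg q]

def coordFlag (n k : ℕ) : Submodule ℤ (Fin n → ℚ) :=
  Submodule.pi {j | k ≤ (j : ℕ)} fun _ => ⊥

lemma mem_coordFlag {n k : ℕ} {x : Fin n → ℚ} :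
    x ∈ coordFlag n k ↔ ∀ j : Fin n, k ≤ j → x j = 0 := by
  simp [coordFlag, Submodule.mem_pi]

lemma coordFlag_zero (n : ℕ) : coordFlag n 0 = ⊥ := by
  ext x
  simp [mem_coordFlag, funext_iff]

lemma coordFlag_self (n : ℕ) : coordFlag n n = ⊤ := by
  ext x
  simp only [mem_coordFlag, mem_top, iff_true]
  exact fun j hj => absurd j.isLt (not_lt.2 hj)

lemma coordFlag_mono (n : ℕ) : Monotone (coordFlag n) :=
  fun _ _ hkl _ hx => mem_coordFlag.2 fun j hj => mem_coordFlag.1 hx j (hkl.trans hj)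

section Lattice

variable {n : ℕ} {Λ : Submodule ℤ (Fin n → ℚ)}

lemma intCast_mem_of_forall_single_mem (hstd : ∀ j, Pi.single j (1 : ℚ) ∈ Λ) (v : Fin n → ℤ) :
    (fun j => (v j : ℚ)) ∈ Λ := by
  have hv : (fun j => (v j : ℚ)) = ∑ j, v j • Pi.single j (1 : ℚ) := by
    ext i
    simp [Finset.sum_apply, Pi.single_apply]
  rw [hv]
  exact sum_mem fun j _ => zsmul_mem (hstd j) _

lemma exists_generator_mod_coordFlag (hfg : Λ.FG) (hstd : ∀ j, Pi.single j (1 : ℚ) ∈ Λ)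
    (i : Fin n) :
    ∃ g ∈ Λ ⊓ coordFlag n (i + 1), (∀ j, |g j| ≤ 1) ∧
      ∀ x ∈ Λ ⊓ coordFlag n (i + 1), ∃ m : ℤ, x - m • g ∈ Λ ⊓ coordFlag n i := by
  set Λ' := Λ ⊓ coordFlag n (i + 1)
  have hsingle : Pi.single i (1 : ℚ) ∈ Λ' :=
    ⟨hstd i, mem_coordFlag.2 fun j hj => Pi.single_eq_of_ne (by omega) _⟩
  obtain ⟨q, hq, hq1⟩ := exists_eq_span_singleton_abs_le_one (Λ'.map (LinearMap.proj i))
    ((hfg.of_le inf_le_left).map _) ⟨_, hsingle, by simp⟩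
  obtain ⟨g₀, hg₀, hg₀i⟩ : q ∈ Λ'.map (LinearMap.proj i) := hq ▸ mem_span_singleton_self q
  set v : Fin n → ℤ := fun j => if (j : ℕ) < i then ⌊g₀ j⌋ else 0
  have hv : (fun j => (v j : ℚ)) ∈ Λ ⊓ coordFlag n i :=
    ⟨intCast_mem_of_forall_single_mem hstd v,
      mem_coordFlag.2 fun j hj => by simp only [v, if_neg (not_lt.2 hj), Int.cast_zero]⟩
  -- reduce the coordinates of `g₀` below `i` modulo `ℤ`, which stays in `Λ` as `ℤⁿ ⊆ Λ`
  set g := g₀ - fun j => (v j : ℚ)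
  have hg : g ∈ Λ' := sub_mem hg₀ (inf_le_inf_left _ (coordFlag_mono n i.val.le_succ) hv)
  have hgi : g i = q := by simpa [g, v] using hg₀i
  refine ⟨g, hg, fun j => ?_, fun x hx => ?_⟩
  · rcases lt_trichotomy (j : ℕ) i with hj | hj | hj
    · simp only [g, Pi.sub_apply, v, if_pos hj]
      rw [← Int.fract, abs_of_nonneg (Int.fract_nonneg _)]
      exact (Int.fract_lt_one _).le
    · rw [show j = i from Fin.ext hj, hgi]
      exact hq1
    · simp [g, v, mem_coordFlag.1 hg₀.2 j hj]
  · obtain ⟨m, hm⟩ := mem_span_singleton.1 (hq ▸ mem_map_of_mem (f := LinearMap.proj i) hx)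
    have hxg : x - m • g ∈ Λ' := sub_mem hx (zsmul_mem hg m)
    refine ⟨m, hxg.1, mem_coordFlag.2 fun j hj => ?_⟩
    rcases hj.lt_or_eq with hj | hj
    · exact mem_coordFlag.1 hxg.2 j hj
    · rw [show j = i from Fin.ext hj.symm]
      rw [Pi.sub_apply, Pi.smul_apply, hgi, hm, LinearMap.proj_apply, sub_self]

lemma exists_abs_le_one_span_eq_inf_coordFlag (hfg : Λ.FG)
    (hstd : ∀ j, Pi.single j (1 : ℚ) ∈ Λ) {k : ℕ} (hk : k ≤ n) :
    ∃ f : Fin k → Fin n → ℚ, (∀ i j, |f i j| ≤ 1) ∧ span ℤ (Set.range f) = Λ ⊓ coordFlag n k := by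
  induction k with
  | zero => exact ⟨Fin.elim0, fun i => i.elim0, by simp [coordFlag_zero]⟩
  | succ k ih =>
    obtain ⟨f, hf, hspan⟩ := ih (by omega)
    obtain ⟨g, hg, hg1, hgen⟩ := exists_generator_mod_coordFlag hfg hstd ⟨k, hk⟩
    refine ⟨Fin.snoc f g, fun i j => ?_, ?_⟩
    · cases i using Fin.lastCases with
      | last => simpa using hg1 j
      | cast i => simpa using hf i j
    · rw [Fin.range_snoc, span_insert, hspan]
      apply le_antisymm
      · exact sup_le ((span_singleton_le_iff_mem _ _).2 hg)
          (inf_le_inf_left _ (coordFlag_mono n k.le_succ))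
      · intro x hx
        obtain ⟨m, hm⟩ := hgen x hx
        exact mem_sup.2 ⟨m • g, smul_mem _ _ (mem_span_singleton_self g), _, hm, by abel⟩

theorem exists_basis_abs_le_one (hfg : Λ.FG) (hstd : ∀ j, Pi.single j (1 : ℚ) ∈ Λ) :
    ∃ b : Module.Basis (Fin n) ℤ Λ, ∀ i j, |(b i : Fin n → ℚ) j| ≤ 1 := by
  obtain ⟨f, hf, hspan⟩ := exists_abs_le_one_span_eq_inf_coordFlag hfg hstd le_rfl
  rw [coordFlag_self, inf_top_eq] at hspan
  have hspanℚ : ⊤ ≤ span ℚ (Set.range f) := by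
    rw [← (Pi.basisFun ℚ (Fin n)).span_eq, span_le]
    rintro _ ⟨j, rfl⟩
    rw [Pi.basisFun_apply]
    exact span_le_restrictScalars ℤ ℚ _ (hspan ▸ hstd j)
  have hli : LinearIndependent ℤ f :=
    (linearIndependent_of_top_le_span_of_card_eq_finrank hspanℚ (by simp)).restrict_scalars' ℤ
  exact ⟨(Module.Basis.span hli).map (LinearEquiv.ofEq _ _ hspan), fun i j => by simpa using hf i j⟩

end Lattice

lemma Seminorm.apply_sum_smul_le_mul_card {E ι : Type*} [AddCommGroup E] [Module ℝ E] [Fintype ι]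
    (p : Seminorm ℝ E) {c : ι → ℝ} (hc : ∀ k, |c k| ≤ 1) {v : ι → E} {l : ℝ}
    (hv : ∀ k, p (v k) ≤ l) :
    p (∑ k, c k • v k) ≤ l * Fintype.card ι :=
  calc p (∑ k, c k • v k) ≤ ∑ k, p (c k • v k) :=
        Finset.le_sum_of_subadditive p (map_zero p).le (map_add_le_add p) _ _
    _ = ∑ k, |c k| * p (v k) := by simp only [map_smul_eq_mul, Real.norm_eq_abs]
    _ ≤ ∑ _k : ι, l :=
        Finset.sum_le_sum fun k _ => (mul_le_of_le_one_left (apply_nonneg p _) (hc k)).trans (hv k)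
    _ = l * Fintype.card ι := by rw [Finset.sum_const, nsmul_eq_mul, mul_comm, Finset.card_univ]

def intCastLinearMap (ι : Type*) : (ι → ℤ) →ₗ[ℤ] ι → ℚ :=
  LinearMap.compLeft (Algebra.linearMap ℤ ℚ) ι

@[simp]
lemma intCastLinearMap_apply {ι : Type*} (x : ι → ℤ) : intCastLinearMap ι x = fun j => (x j : ℚ) :=
  rfl

lemma intCastLinearMap_injective (ι : Type*) : Function.Injective (intCastLinearMap ι) :=
  fun _ _ h => funext fun j => Int.cast_injective (congrFun h j)

theorem exists_basis_seminorm_le {n : ℕ} (p : Seminorm ℝ (Fin n → ℝ)) (e : Fin n → Fin n → ℤ)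
    (he : LinearIndependent ℚ fun i j => (e i j : ℚ)) {l : ℝ}
    (hl : ∀ i, p (fun j => (e i j : ℝ)) ≤ l) :
    ∃ B : Module.Basis (Fin n) ℤ (Fin n → ℤ), ∀ i, p (fun j => (B i j : ℝ)) ≤ l * n := by
  let E := Module.Basis.mk he (he.span_eq_top_of_card_eq_finrank' (by simp)).ge
  -- `ψ x` is the coordinate vector of `x` with respect to `e`
  let ψ : (Fin n → ℤ) →ₗ[ℤ] Fin n → ℚ :=
    (E.equivFun.restrictScalars ℤ).toLinearMap ∘ₗ intCastLinearMap (Fin n)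
  have hψ : Function.Injective ψ := E.equivFun.injective.comp (intCastLinearMap_injective _)
  have hψe (j : Fin n) : ψ (e j) = Pi.single j 1 := by
    ext k
    simpa [ψ, E, Pi.single_apply, eq_comm] using E.equivFun_self j k
  obtain ⟨b, hb⟩ := exists_basis_abs_le_one (Λ := LinearMap.range ψ)
    (LinearMap.range_eq_map ψ ▸ (Module.Finite.fg_top).map ψ) fun j => ⟨e j, hψe j⟩
  let B := b.map (LinearEquiv.ofInjective ψ hψ).symm
  refine ⟨B, fun i => ?_⟩
  set c : Fin n → ℚ := (b i : Fin n → ℚ)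
  have hψB : ψ (B i) = c := by
    rw [Module.Basis.map_apply, ← LinearEquiv.ofInjective_apply (h := hψ),
      LinearEquiv.apply_symm_apply]
  have hsumℚ := E.sum_equivFun (intCastLinearMap _ (B i))
  change ∑ k, ψ (B i) k • E k = _ at hsumℚ
  rw [hψB] at hsumℚ
  have hsum : (fun j => (B i j : ℝ)) = ∑ k, (c k : ℝ) • fun j => (e k j : ℝ) := by
    ext j
    have hj : ∑ k, c k * e k j = B i j := by simpa [E, Finset.sum_apply] using congrFun hsumℚ j
    simp only [Finset.sum_apply, Pi.smul_apply, smul_eq_mul]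
    exact_mod_cast hj.symm
  rw [hsum]
  exact p.apply_sum_smul_le_mul_card (fun k => by exact_mod_cast hb i k) hl |>.trans_eq (by simp)

-- `λ' = sInf (rationalBasisBounds N)` and `λ = sInf (integralBasisBounds N)`
def rationalBasisBounds {n : ℕ} (N : (Fin n → ℝ) → ℝ) : Set ℝ :=
  { l : ℝ | 0 < l ∧ ∃ e : Fin n → (Fin n → ℤ),
    LinearIndependent ℚ (fun i => (fun j => ((e i j : ℚ)) : Fin n → ℚ)) ∧
    ∀ i, N (fun j => ((e i j : ℝ))) ≤ l }

def integralBasisBounds {n : ℕ} (N : (Fin n → ℝ) → ℝ) : Set ℝ :=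
  { l : ℝ | 0 < l ∧ ∃ e : Fin n → (Fin n → ℤ),
    (∃ B : Module.Basis (Fin n) ℤ (Fin n → ℤ), ∀ i, B i = e i) ∧
    ∀ i, N (fun j => ((e i j : ℝ))) ≤ l }

lemma integralBasisBounds_nonempty {n : ℕ} (N : (Fin n → ℝ) → ℝ) :
    (integralBasisBounds N).Nonempty := by
  let e : Fin n → Fin n → ℤ := Pi.basisFun ℤ (Fin n)
  refine ⟨1 + ∑ i, |N fun j => (e i j : ℝ)|, by positivity, e,
    ⟨Pi.basisFun ℤ (Fin n), fun _ => rfl⟩, fun i => ?_⟩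
  have := Finset.single_le_sum (f := fun i => |N fun j => (e i j : ℝ)|) (fun _ _ => abs_nonneg _)
    (Finset.mem_univ i)
  linarith [le_abs_self (N fun j => (e i j : ℝ))]

lemma integralBasisBounds_subset_rationalBasisBounds {n : ℕ} (N : (Fin n → ℝ) → ℝ) :
    integralBasisBounds N ⊆ rationalBasisBounds N := by
  rintro l ⟨hl, e, ⟨B, hB⟩, hle⟩
  refine ⟨hl, e, ?_, hle⟩
  have : LinearIndependent ℤ e := (funext hB : ⇑B = e) ▸ B.linearIndependent
  exact (LinearIndependent.iff_fractionRing ℤ ℚ).1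
    (this.map' _ (LinearMap.ker_eq_bot.2 (intCastLinearMap_injective _)))

lemma sInf_integralBasisBounds_le {n : ℕ} (p : Seminorm ℝ (Fin n → ℝ)) :
    sInf (integralBasisBounds p) ≤ sInf (rationalBasisBounds p) * n := by
  have key : ∀ l ∈ rationalBasisBounds p, sInf (integralBasisBounds p) ≤ l * n := by
    rintro l ⟨hl, e, he, hle⟩
    obtain ⟨B, hB⟩ := exists_basis_seminorm_le p e he hle
    refine le_of_forall_pos_le_add fun ε hε => csInf_le ⟨0, fun _ hl => hl.1.le⟩
      ⟨by positivity, B, ⟨B, fun _ => rfl⟩, fun i => (hB i).trans (le_add_of_nonneg_right hε.le)⟩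
  rw [mul_comm, ← smul_eq_mul, ← Real.sInf_smul_of_nonneg (Nat.cast_nonneg n)]
  refine le_csInf (((integralBasisBounds_nonempty p).mono
    (integralBasisBounds_subset_rationalBasisBounds p)).smul_set) ?_
  rintro _ ⟨l, hl, rfl⟩
  show _ ≤ (n : ℝ) • l
  rw [smul_eq_mul, mul_comm]
  exact key l hl

theorem zhang_lambda_inequality_general (n : ℕ) (N : (Fin n → ℝ) → ℝ)
    (hNsmul : ∀ (a : ℝ) (x), N (a • x) = |a| * N x)
    (hNadd : ∀ x y, N (x + y) ≤ N x + N y) :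
    sInf { l : ℝ | 0 < l ∧ ∃ e : Fin n → (Fin n → ℤ),
        LinearIndependent ℚ (fun i => (fun j => ((e i j : ℚ)) : Fin n → ℚ)) ∧
        ∀ i, N (fun j => ((e i j : ℝ))) ≤ l } ≤
      sInf { l : ℝ | 0 < l ∧ ∃ e : Fin n → (Fin n → ℤ),
        (∃ B : Module.Basis (Fin n) ℤ (Fin n → ℤ), ∀ i, B i = e i) ∧
        ∀ i, N (fun j => ((e i j : ℝ))) ≤ l } ∧
    sInf { l : ℝ | 0 < l ∧ ∃ e : Fin n → (Fin n → ℤ),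
        (∃ B : Module.Basis (Fin n) ℤ (Fin n → ℤ), ∀ i, B i = e i) ∧
        ∀ i, N (fun j => ((e i j : ℝ))) ≤ l } ≤
      sInf { l : ℝ | 0 < l ∧ ∃ e : Fin n → (Fin n → ℤ),
        LinearIndependent ℚ (fun i => (fun j => ((e i j : ℚ)) : Fin n → ℚ)) ∧
        ∀ i, N (fun j => ((e i j : ℝ))) ≤ l } * n :=
  ⟨csInf_le_csInf ⟨0, fun _ hl => hl.1.le⟩ (integralBasisBounds_nonempty N)
      (integralBasisBounds_subset_rationalBasisBounds N),
    sInf_integralBasisBounds_le (Seminorm.of N hNadd hNsmul)⟩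

theorem zhang_lambda_inequality (n : ℕ) (N : (Fin n → ℝ) → ℝ)
    (hN0 : ∀ x, 0 ≤ N x) (hNeq : ∀ x, N x = 0 ↔ x = 0)
    (hNsmul : ∀ (a : ℝ) (x), N (a • x) = |a| * N x)
    (hNadd : ∀ x y, N (x + y) ≤ N x + N y) :
    sInf { l : ℝ | 0 < l ∧ ∃ e : Fin n → (Fin n → ℤ),
        LinearIndependent ℚ (fun i => (fun j => ((e i j : ℚ)) : Fin n → ℚ)) ∧
        ∀ i, N (fun j => ((e i j : ℝ))) ≤ l } ≤
      sInf { l : ℝ | 0 < l ∧ ∃ e : Fin n → (Fin n → ℤ),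
        (∃ B : Module.Basis (Fin n) ℤ (Fin n → ℤ), ∀ i, B i = e i) ∧
        ∀ i, N (fun j => ((e i j : ℝ))) ≤ l } ∧
    sInf { l : ℝ | 0 < l ∧ ∃ e : Fin n → (Fin n → ℤ),
        (∃ B : Module.Basis (Fin n) ℤ (Fin n → ℤ), ∀ i, B i = e i) ∧
        ∀ i, N (fun j => ((e i j : ℝ))) ≤ l } ≤
      sInf { l : ℝ | 0 < l ∧ ∃ e : Fin n → (Fin n → ℤ),
        LinearIndependent ℚ (fun i => (fun j => ((e i j : ℚ)) : Fin n → ℚ)) ∧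
        ∀ i, N (fun j => ((e i j : ℝ))) ≤ l } * n :=
  zhang_lambda_inequality_general n N hNsmul hNadd
end
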